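/- arXiv:0808.2996 — 6 statements merged into one kernel-verified Lean document; each statement's English description precedes it below -/
import Mathlib

section
/- For each m ≥ 1, the ℝ-algebra of polynomials on ℝ² invariant under the cyclic group K_m generated by the rotation of angle 2π/m is generated by x² + y², p_m(x,y) = Re((x+iy)^m), and q_m(x,y) = Im((x+iy)^m). -/
/-!
In the complex coordinates `z = x + i y`, `w = x - i y` the rotation by `θ` becomes the diagonal
substitution `z ↦ ζ z`, `w ↦ ζ⁻¹ w` with `ζ = e^{iθ}`. For `θ = 2π/m`, `ζ` is a primitive `m`-th
root of unity, so a monomial `z^a w^b` is invariant iff `m ∣ a - b`, i.e. iff it is a product of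
powers of `zw = x² + y²`, `z^m = p + i q` and `w^m = p - i q`. Invariance of a real polynomial
is checked after complexification, and membership in the real algebra is recovered by taking
coefficientwise real parts.
-/

open MvPolynomial Real Matrix Complex

/-- The rotation of `ℝ²` by angle `θ`. -/
noncomputable def rotMat (θ : ℝ) : Matrix (Fin 2) (Fin 2) ℝ :=
  !![Real.cos θ, -Real.sin θ; Real.sin θ, Real.cos θ]

namespace MvPolynomial

section compMatrix

variable {R S n : Type*} [CommSemiring R] [CommSemiring S] [Fintype n]

/-- The linear change of variables `P ↦ P ∘ M`. -/
noncomputable def compMatrix (M : Matrix n n R) : MvPolynomial n R →ₐ[R] MvPolynomial n R :=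
  bind₁ fun i => ∑ j, M i j • X j

theorem compMatrix_X (M : Matrix n n R) (i : n) : compMatrix M (X i) = ∑ j, M i j • X j :=
  bind₁_X_right _ _

theorem eval_compMatrix (M : Matrix n n R) (P : MvPolynomial n R) (v : n → R) :
    eval v (compMatrix M P) = eval (M *ᵥ v) P := by
  rw [compMatrix, eval, eval₂Hom_bind₁]
  congr 2
  funext i
  simp [mulVec, dotProduct]

theorem compMatrix_compMatrix (M N : Matrix n n R) (P : MvPolynomial n R) :
    compMatrix M (compMatrix N P) = compMatrix (N * M) P := by
  rw [← AlgHom.comp_apply]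
  congr 1
  refine algHom_ext fun i => ?_
  simp only [AlgHom.comp_apply, compMatrix_X, map_sum, map_smul, Finset.smul_sum, smul_smul,
    mul_apply, Finset.sum_smul]
  exact Finset.sum_comm

theorem compMatrix_one [DecidableEq n] : compMatrix (1 : Matrix n n R) = AlgHom.id R _ :=
  algHom_ext fun i => by simp [compMatrix_X, one_apply]

theorem map_compMatrix (f : R →+* S) (M : Matrix n n R) (P : MvPolynomial n R) :
    map f (compMatrix M P) = compMatrix (M.map f) (map f P) := by
  induction P using MvPolynomial.induction_on with
  | C a => simp [compMatrix]
  | add P Q hP hQ => simp only [map_add, hP, hQ]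
  | mul_X P i hP => simp [hP, compMatrix_X, smul_eq_C_mul]

theorem compMatrix_eq_self_iff {R : Type*} [CommRing R] [IsDomain R] [Infinite R]
    (M : Matrix n n R) (P : MvPolynomial n R) :
    compMatrix M P = P ↔ ∀ v, eval (M *ᵥ v) P = eval v P := by
  simp only [MvPolynomial.funext_iff, eval_compMatrix]

theorem compMatrix_diagonal [DecidableEq n] (c : n → R) :
    compMatrix (diagonal c) = aeval fun i => c i • X i :=
  algHom_ext fun i => by simp [compMatrix_X, diagonal_apply]

end compMatrix

theorem aeval_smul_X_monomial {σ R : Type*} [CommSemiring R] (c : σ → R) (d : σ →₀ ℕ) (a : R) :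
    aeval (fun i => c i • X i) (monomial d a) = monomial d ((d.prod fun i k => c i ^ k) * a) := by
  rw [aeval_monomial, monomial_eq, algebraMap_eq, C_mul, mul_comm (C _)]
  simp only [smul_eq_C_mul, mul_pow]
  rw [Finsupp.prod_mul, map_finsuppProd]
  simp only [map_pow]
  ring

theorem coeff_aeval_smul_X {σ R : Type*} [CommSemiring R] (c : σ → R) (Q : MvPolynomial σ R)
    (d : σ →₀ ℕ) :
    coeff d (aeval (fun i => c i • X i) Q) = (d.prod fun i k => c i ^ k) * coeff d Q := by
  classical
  induction Q using MvPolynomial.induction_on' with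
  | monomial e a =>
    rw [aeval_smul_X_monomial, coeff_monomial, coeff_monomial]
    split_ifs with h
    · rw [h]
    · rw [mul_zero]
  | add P Q hP hQ => rw [map_add, coeff_add, coeff_add, hP, hQ, mul_add]

theorem monomial_mem_adjoin_of_dvd {R : Type*} [CommSemiring R] {m : ℕ} {d : Fin 2 →₀ ℕ}
    (hd : (m : ℤ) ∣ d 0 - d 1) (a : R) :
    monomial d a ∈ Algebra.adjoin R {X 0 * X 1, X 0 ^ m, X 1 ^ m} := by
  set A := Algebra.adjoin R ({X 0 * X 1, X 0 ^ m, X 1 ^ m} : Set (MvPolynomial (Fin 2) R))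
  have h01 : X 0 * X 1 ∈ A := Algebra.subset_adjoin (by simp)
  have h0 : X 0 ^ m ∈ A := Algebra.subset_adjoin (by simp)
  have h1 : X 1 ^ m ∈ A := Algebra.subset_adjoin (by simp)
  rw [monomial_eq, Finsupp.prod_fintype _ _ (by simp), Fin.prod_univ_two]
  refine mul_mem (Subalgebra.algebraMap_mem A a) ?_
  obtain ⟨k, hk⟩ := hd
  rcases Int.eq_nat_or_neg k with ⟨n, rfl | rfl⟩
  · have hd0 : d 0 = d 1 + m * n := by zify; linarith
    rw [hd0, pow_add, pow_mul, mul_right_comm, ← mul_pow]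
    exact mul_mem (pow_mem h01 _) (pow_mem h0 _)
  · have hd1 : d 1 = d 0 + m * n := by zify; linarith
    rw [hd1, pow_add, pow_mul, ← mul_assoc, ← mul_pow]
    exact mul_mem (pow_mem h01 _) (pow_mem h1 _)

theorem dvd_of_mem_support_of_compMatrix_diagonal_eq_self {K : Type*} [Field K] {m : ℕ} {ζ : K}
    (hζ : IsPrimitiveRoot ζ m) {Q : MvPolynomial (Fin 2) K}
    (hQ : compMatrix (diagonal ![ζ, ζ⁻¹]) Q = Q) {d : Fin 2 →₀ ℕ} (hd : d ∈ Q.support) :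
    (m : ℤ) ∣ d 0 - d 1 := by
  have hcoeff := congrArg (coeff d) hQ
  rw [compMatrix_diagonal, coeff_aeval_smul_X, Finsupp.prod_fintype _ _ (by simp),
    Fin.prod_univ_two] at hcoeff
  have hpow : ζ ^ d 0 * ζ⁻¹ ^ d 1 = 1 :=
    mul_right_cancel₀ (mem_support_iff.mp hd) (hcoeff.trans (one_mul _).symm)
  rcases eq_or_ne ζ 0 with rfl | hζ0
  -- `0` is a primitive `0`-th root of unity
  · rw [_root_.inv_zero, ← pow_add, zero_pow_eq_one₀, Nat.add_eq_zero_iff] at hpow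
    simp [hpow]
  rw [← hζ.zpow_eq_one_iff_dvd, zpow_sub₀ hζ0, zpow_natCast, zpow_natCast, div_eq_mul_inv,
    ← inv_pow, hpow]

theorem mem_adjoin_of_compMatrix_diagonal_eq_self {K : Type*} [Field K] {m : ℕ} {ζ : K}
    (hζ : IsPrimitiveRoot ζ m) {Q : MvPolynomial (Fin 2) K}
    (hQ : compMatrix (diagonal ![ζ, ζ⁻¹]) Q = Q) :
    Q ∈ Algebra.adjoin K {X 0 * X 1, X 0 ^ m, X 1 ^ m} := by
  rw [Q.as_sum]
  exact sum_mem fun d hd =>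
    monomial_mem_adjoin_of_dvd (dvd_of_mem_support_of_compMatrix_diagonal_eq_self hζ hQ hd) _

section rePart

variable {σ : Type*}

noncomputable def rePart : MvPolynomial σ ℂ →ₗ[ℝ] MvPolynomial σ ℝ where
  toFun A := AddMonoidAlgebra.map Complex.reLm.toAddMonoidHom A
  map_add' _ _ := by ext; simp
  map_smul' _ _ := by ext; simp

theorem coeff_rePart (A : MvPolynomial σ ℂ) (d : σ →₀ ℕ) : coeff d (rePart A) = (coeff d A).re :=
  rfl

theorem rePart_smul_map (c : ℂ) (P : MvPolynomial σ ℝ) :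
    rePart (c • map (algebraMap ℝ ℂ) P) = c.re • P := by
  ext d
  simp [coeff_rePart, coeff_map]

theorem rePart_map (P : MvPolynomial σ ℝ) : rePart (map (algebraMap ℝ ℂ) P) = P := by
  simpa using rePart_smul_map 1 P

theorem rePart_mem_span_of_mem_span {T : Set (MvPolynomial σ ℝ)} {A : MvPolynomial σ ℂ}
    (hA : A ∈ Submodule.span ℂ (map (algebraMap ℝ ℂ) '' T)) :
    rePart A ∈ Submodule.span ℝ T := by
  suffices ∀ c : ℂ, rePart (c • A) ∈ Submodule.span ℝ T by simpa using this 1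
  induction hA using Submodule.span_induction with
  | mem x hx =>
    obtain ⟨t, ht, rfl⟩ := hx
    intro c
    rw [rePart_smul_map]
    exact Submodule.smul_mem _ _ (Submodule.subset_span ht)
  | zero => simp
  | add x y _ _ hx hy => intro c; rw [smul_add, map_add]; exact add_mem (hx c) (hy c)
  | smul a x _ hx => intro c; rw [smul_smul]; exact hx _

theorem mem_adjoin_of_map_mem_adjoin {S : Set (MvPolynomial σ ℝ)} {P : MvPolynomial σ ℝ}
    (hP : map (algebraMap ℝ ℂ) P ∈ Algebra.adjoin ℂ (map (algebraMap ℝ ℂ) '' S)) :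
    P ∈ Algebra.adjoin ℝ S := by
  rw [← Subalgebra.mem_toSubmodule, Algebra.adjoin_eq_span] at hP ⊢
  have hclosure : (Submonoid.closure (map (algebraMap ℝ ℂ) '' S) : Set (MvPolynomial σ ℂ)) =
      map (algebraMap ℝ ℂ) '' Submonoid.closure S :=
    congrArg SetLike.coe
      (MonoidHom.map_mclosure (map (algebraMap ℝ ℂ) : _ →+* _).toMonoidHom S).symm
  rw [hclosure] at hP
  simpa [rePart_map] using rePart_mem_span_of_mem_span hP

end rePart

theorem eq_of_eval_ofReal_eq {σ : Type*} {A B : MvPolynomial σ ℂ}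
    (h : ∀ v : σ → ℝ, eval (fun i => (v i : ℂ)) A = eval (fun i => (v i : ℂ)) B) : A = B := by
  refine funext_set (fun _ => Set.range ofReal)
    (fun _ => Set.infinite_range_of_injective ofReal_injective) fun x hx => ?_
  choose v hv using fun i => hx i (Set.mem_univ i)
  obtain rfl : (fun i => (v i : ℂ)) = x := _root_.funext hv
  exact h v

theorem eval_ofReal_map {σ : Type*} (v : σ → ℝ) (P : MvPolynomial σ ℝ) :
    eval (fun i => (v i : ℂ)) (map (algebraMap ℝ ℂ) P) = eval v P := by
  rw [eval_map]
  exact (eval₂_comp _ v P).symm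

end MvPolynomial

/-- The change of coordinates `(x, y) ↦ (z, w) = (x + i y, x - i y)`. -/
noncomputable def zwMat : Matrix (Fin 2) (Fin 2) ℂ := !![1, I; 1, -I]

noncomputable def zwMatInv : Matrix (Fin 2) (Fin 2) ℂ := !![1 / 2, 1 / 2; -I / 2, I / 2]

theorem zwMatInv_mul_zwMat : zwMatInv * zwMat = 1 := by
  ext i j
  fin_cases i <;> fin_cases j <;> simp [zwMatInv, zwMat, Matrix.mul_apply] <;> ring_nf
  simp [I_sq]

theorem rotMat_map_mul_zwMatInv (θ : ℝ) :
    (rotMat θ).map (algebraMap ℝ ℂ) * zwMatInv =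
      zwMatInv * diagonal ![exp (θ * I), (exp (θ * I))⁻¹] := by
  rw [← Complex.exp_neg, ← neg_mul, exp_mul_I, exp_mul_I, Complex.cos_neg, Complex.sin_neg,
    ← ofReal_cos, ← ofReal_sin]
  ext i j
  fin_cases i <;> fin_cases j <;> simp [rotMat, zwMatInv, Matrix.mul_apply] <;> ring_nf <;>
    simp [I_sq] <;> ring

theorem ofReal_rotMat_mulVec (θ : ℝ) (v : Fin 2 → ℝ) :
    ((rotMat θ *ᵥ v) 0 : ℂ) + ((rotMat θ *ᵥ v) 1 : ℂ) * I = exp (θ * I) * (v 0 + v 1 * I) := by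
  rw [exp_mul_I, ← ofReal_cos, ← ofReal_sin]
  simp [rotMat, mulVec, dotProduct, Fin.sum_univ_two]
  ring_nf
  simp [I_sq]
  ring

theorem exp_two_pi_mul_int_div_mul_I_pow (m : ℕ) (k : ℤ) :
    exp (((2 * π * k / m : ℝ) : ℂ) * I) ^ m = 1 := by
  rcases eq_or_ne m 0 with rfl | hm
  · exact pow_zero _
  rw [← Complex.exp_nat_mul, ← exp_int_mul_two_pi_mul_I k]
  congr 1
  push_cast
  field_simp

theorem compMatrix_zwMat_X_zero_mul_X_one :
    compMatrix zwMat (X 0 * X 1) = map (algebraMap ℝ ℂ) (X 0 ^ 2 + X 1 ^ 2) := by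
  have hI : (C I : MvPolynomial (Fin 2) ℂ) ^ 2 = -1 := by rw [← map_pow, I_sq, map_neg, map_one]
  simp [compMatrix_X, zwMat, Fin.sum_univ_two, smul_eq_C_mul]
  linear_combination (-X 1 ^ 2 : MvPolynomial (Fin 2) ℂ) * hI

section generators

variable {m : ℕ} {p q : MvPolynomial (Fin 2) ℝ}
    (hp : ∀ v : Fin 2 → ℝ, eval v p = (((v 0 : ℂ) + (v 1 : ℂ) * I) ^ m).re)
    (hq : ∀ v : Fin 2 → ℝ, eval v q = (((v 0 : ℂ) + (v 1 : ℂ) * I) ^ m).im)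
include hp hq

theorem compMatrix_zwMat_X_zero_pow :
    compMatrix zwMat (X 0 ^ m) = map (algebraMap ℝ ℂ) p + I • map (algebraMap ℝ ℂ) q := by
  refine eq_of_eval_ofReal_eq fun v => ?_
  simp [eval_compMatrix, -eval_map, eval_ofReal_map, hp, hq, zwMat, dotProduct, Fin.sum_univ_two]
  rw [mul_comm I, mul_comm I, re_add_im]

theorem compMatrix_zwMat_X_one_pow :
    compMatrix zwMat (X 1 ^ m) = map (algebraMap ℝ ℂ) p - I • map (algebraMap ℝ ℂ) q := by
  refine eq_of_eval_ofReal_eq fun v => ?_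
  simp [eval_compMatrix, -eval_map, eval_ofReal_map, hp, hq, zwMat, dotProduct, Fin.sum_univ_two]
  rw [show (v 0 : ℂ) + -(I * v 1) = starRingEnd ℂ (v 0 + v 1 * I) by simp [mul_comm], ← map_pow]
  generalize ((v 0 : ℂ) + v 1 * I) ^ m = z
  apply Complex.ext <;> simp

theorem image_compMatrix_zwMat_subset_adjoin :
    compMatrix zwMat '' {X 0 * X 1, X 0 ^ m, X 1 ^ m} ⊆
      Algebra.adjoin ℂ (map (algebraMap ℝ ℂ) '' {X 0 ^ 2 + X 1 ^ 2, p, q}) := by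
  set A := Algebra.adjoin ℂ (map (algebraMap ℝ ℂ) '' {X 0 ^ 2 + X 1 ^ 2, p, q})
  have hp' : map (algebraMap ℝ ℂ) p ∈ A := Algebra.subset_adjoin (by simp)
  have hq' : I • map (algebraMap ℝ ℂ) q ∈ A :=
    Subalgebra.smul_mem _ (Algebra.subset_adjoin (by simp)) _
  rintro _ ⟨g, hg, rfl⟩
  rcases hg with rfl | rfl | rfl
  · rw [compMatrix_zwMat_X_zero_mul_X_one]
    exact Algebra.subset_adjoin (by simp)
  · rw [compMatrix_zwMat_X_zero_pow hp hq]
    exact add_mem hp' hq'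
  · rw [compMatrix_zwMat_X_one_pow hp hq]
    exact sub_mem hp' hq'

theorem compMatrix_rotMat_eq_self_of_mem_adjoin (k : ℤ) {P : MvPolynomial (Fin 2) ℝ}
    (hP : P ∈ Algebra.adjoin ℝ {X 0 ^ 2 + X 1 ^ 2, p, q}) :
    compMatrix (rotMat (2 * π * k / m)) P = P := by
  set θ := 2 * π * k / m
  have hζ : exp (θ * I) ^ m = 1 := exp_two_pi_mul_int_div_mul_I_pow m k
  refine AlgHom.adjoin_le_equalizer (compMatrix (rotMat θ)) (AlgHom.id ℝ _) ?_ hP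
  rintro _ (rfl | rfl | rfl) <;> rw [AlgHom.id_apply, compMatrix_eq_self_iff] <;> intro v
  · simp [rotMat, dotProduct, Fin.sum_univ_two]
    linear_combination (v 0 ^ 2 + v 1 ^ 2) * Real.sin_sq_add_cos_sq θ
  · rw [hp, hp, ofReal_rotMat_mulVec, mul_pow, hζ, one_mul]
  · rw [hq, hq, ofReal_rotMat_mulVec, mul_pow, hζ, one_mul]

theorem mem_adjoin_of_compMatrix_rotMat_eq_self (hm : m ≠ 0) {P : MvPolynomial (Fin 2) ℝ}
    (hP : compMatrix (rotMat (2 * π / m)) P = P) :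
    P ∈ Algebra.adjoin ℝ {X 0 ^ 2 + X 1 ^ 2, p, q} := by
  set θ : ℝ := 2 * π / m
  have hζ : IsPrimitiveRoot (exp (θ * I)) m := by
    convert Complex.isPrimitiveRoot_exp m hm using 2
    simp only [θ]
    push_cast
    ring
  have hPc : compMatrix ((rotMat θ).map (algebraMap ℝ ℂ)) (map (algebraMap ℝ ℂ) P) =
      map (algebraMap ℝ ℂ) P := by
    rw [← map_compMatrix, hP]
  set Q := compMatrix zwMatInv (map (algebraMap ℝ ℂ) P)
  have hQ : compMatrix (diagonal ![exp (θ * I), (exp (θ * I))⁻¹]) Q = Q := by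
    rw [compMatrix_compMatrix, ← rotMat_map_mul_zwMatInv, ← compMatrix_compMatrix, hPc]
  have hPQ : map (algebraMap ℝ ℂ) P = compMatrix zwMat Q := by
    rw [compMatrix_compMatrix, zwMatInv_mul_zwMat, compMatrix_one, AlgHom.id_apply]
  refine mem_adjoin_of_map_mem_adjoin
    (Algebra.adjoin_le (image_compMatrix_zwMat_subset_adjoin hp hq) ?_)
  rw [hPQ, ← AlgHom.map_adjoin]
  exact Subalgebra.mem_map.mpr ⟨Q, mem_adjoin_of_compMatrix_diagonal_eq_self hζ hQ, rfl⟩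

end generators

/-- For `m ≥ 1`, a polynomial on `ℝ²` is invariant under the cyclic group `K_m`
generated by the rotation `σ_m` of angle `2π/m` if and only if it belongs to the
`ℝ`-subalgebra generated by `x² + y²`, `p_m = Re((x+iy)^m)` and `q_m = Im((x+iy)^m)`:
`ℝ[x,y]^{K_m} = ℝ[x² + y², p_m, q_m]`. -/
theorem stmt2 (m : ℕ) (hm : 1 ≤ m) (p q : MvPolynomial (Fin 2) ℝ)
    (hp : ∀ v : Fin 2 → ℝ, eval v p = (((v 0 : ℂ) + (v 1 : ℂ) * Complex.I) ^ m).re)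
    (hq : ∀ v : Fin 2 → ℝ, eval v q = (((v 0 : ℂ) + (v 1 : ℂ) * Complex.I) ^ m).im)
    (P : MvPolynomial (Fin 2) ℝ) :
    (∀ k : ℤ, ∀ v : Fin 2 → ℝ,
        eval ((rotMat (2 * π * k / m)).mulVec v) P = eval v P) ↔
      P ∈ Algebra.adjoin ℝ
        ({X 0 ^ 2 + X 1 ^ 2, p, q} : Set (MvPolynomial (Fin 2) ℝ)) := by
  simp only [← compMatrix_eq_self_iff]
  refine ⟨fun h => mem_adjoin_of_compMatrix_rotMat_eq_self hp hq (Nat.one_le_iff_ne_zero.mp hm) ?_,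
    fun hP k => compMatrix_rotMat_eq_self_of_mem_adjoin hp hq k hP⟩
  simpa using h 1
end

section
/- For m ≥ 1, the stabilizer in O(2) of the polynomial p_m(x,y) = Re((x+iy)^m) under the action (φ·P)(x,y) = P(φ⁻¹(x,y)) is exactly the dihedral group D_m = ⟨σ_m, τ⟩. -/
open MvPolynomial Real Matrix Complex

/-- The reflection `τ(x,y) = (x,-y)` (complex conjugation on `ℂ ≅ ℝ²`). -/
noncomputable def reflMat : Matrix (Fin 2) (Fin 2) ℝ := !![1, 0; 0, -1]

/-!
Identify `ℝ²` with `ℂ`, so that `p_m(z) = Re (z ^ m)`. An orthogonal matrix is either the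
rotation `z ↦ u z` or the rotation-reflection `z ↦ u z̄` with `u = e^{iθ}`, and in both cases
invariance of `p_m` reads `Re (w z ^ m) = Re (z ^ m)` for all `z`, with `w = u ^ m` resp.
`w = ū ^ m`. Since `z ↦ z ^ m` is onto `ℂ`, this forces `w = 1`: `u` is an `m`-th root of
unity, i.e. `θ ≡ 2πk/m`.
-/

open ComplexConjugate

noncomputable def toComplex (v : Fin 2 → ℝ) : ℂ := v 0 + v 1 * I

lemma toComplex_surjective : Function.Surjective toComplex :=
  fun z => ⟨![z.re, z.im], by simp [toComplex]⟩

lemma toComplex_rotMat_mulVec (θ : ℝ) (v : Fin 2 → ℝ) :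
    toComplex (rotMat θ *ᵥ v) = exp (θ * I) * toComplex v := by
  rw [exp_mul_I, ← ofReal_cos, ← ofReal_sin]
  apply Complex.ext <;> simp [toComplex, rotMat, mulVec, dotProduct] <;> ring

lemma toComplex_reflMat_mulVec (v : Fin 2 → ℝ) :
    toComplex (reflMat *ᵥ v) = conj (toComplex v) := by
  simp [toComplex, reflMat, mulVec, dotProduct]

lemma rotMat_eq_rotMat_iff {θ φ : ℝ} : rotMat θ = rotMat φ ↔ exp (θ * I) = exp (φ * I) := by
  constructor
  · intro h
    have hcos : Real.cos θ = Real.cos φ := by simpa [rotMat] using congrFun₂ h 0 0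
    have hsin : Real.sin θ = Real.sin φ := by simpa [rotMat] using congrFun₂ h 1 0
    apply Complex.ext <;> simp [exp_ofReal_mul_I_re, exp_ofReal_mul_I_im, hcos, hsin]
  · intro h
    have hcos : Real.cos θ = Real.cos φ := by simpa using congrArg re h
    have hsin : Real.sin θ = Real.sin φ := by simpa using congrArg im h
    rw [rotMat, rotMat, hcos, hsin]

lemma reflMat_mul_self : reflMat * reflMat = 1 := by
  simp [reflMat, one_fin_two]

lemma mul_reflMat_inj {A B : Matrix (Fin 2) (Fin 2) ℝ} : A * reflMat = B * reflMat ↔ A = B :=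
  ⟨fun h => by simpa [mul_assoc, reflMat_mul_self] using congrArg (· * reflMat) h,
    congrArg (· * reflMat)⟩

lemma rotMat_ne_rotMat_mul_reflMat (θ φ : ℝ) : rotMat θ ≠ rotMat φ * reflMat := by
  intro h
  have hdet := congrArg det h
  simp only [det_mul, rotMat, reflMat, det_fin_two_of] at hdet
  nlinarith [Real.cos_sq_add_sin_sq θ, Real.cos_sq_add_sin_sq φ]

lemma exists_cos_sin_eq {a b : ℝ} (h : a ^ 2 + b ^ 2 = 1) :
    ∃ θ : ℝ, Real.cos θ = a ∧ Real.sin θ = b := by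
  obtain ⟨θ, hθ⟩ := (Complex.norm_eq_one_iff ⟨a, b⟩).mp <| by
    rw [Complex.norm_def, Complex.normSq_mk, ← sq, ← sq, h, Real.sqrt_one]
  exact ⟨θ, by simpa using congrArg re hθ, by simpa using congrArg im hθ⟩

lemma exists_eq_rotMat_or_eq_rotMat_mul_reflMat {A : Matrix (Fin 2) (Fin 2) ℝ}
    (hA : A * Aᵀ = 1) : ∃ θ : ℝ, A = rotMat θ ∨ A = rotMat θ * reflMat := by
  have hA' : Aᵀ * A = 1 := mul_eq_one_comm.mp hA
  have e00 := congrFun₂ hA' 0 0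
  have e01 := congrFun₂ hA' 0 1
  have e11 := congrFun₂ hA' 1 1
  simp only [mul_apply, Fin.sum_univ_two, transpose_apply, one_apply_eq,
    one_apply_ne zero_ne_one] at e00 e01 e11
  rw [eta_fin_two A]
  set a := A 0 0
  set b := A 0 1
  set c := A 1 0
  set d := A 1 1
  obtain ⟨θ, hcos, hsin⟩ := exists_cos_sin_eq (a := a) (b := c) (by linear_combination e00)
  -- the second column is orthogonal to the first, hence `t • (-c, a)` with `t = det A = ±1`
  set t := a * d - b * c
  have hb : b = -t * c := by linear_combination (-b) * e00 + a * e01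
  have hd : d = t * a := by linear_combination (-d) * e00 + c * e01
  have ht : (t - 1) * (t + 1) = 0 := by
    rw [hb, hd] at e11; linear_combination e11 - t ^ 2 * e00
  refine ⟨θ, (mul_eq_zero.mp ht).imp (fun h => ?_) (fun h => ?_)⟩
  · rw [hb, hd, show t = 1 by linarith, rotMat, hcos, hsin]; simp
  · rw [hb, hd, show t = -1 by linarith, rotMat, reflMat, hcos, hsin, mul_fin_two]; simp

lemma forall_re_mul_pow_eq_re_pow_iff {m : ℕ} (hm : m ≠ 0) (w : ℂ) :
    (∀ z : ℂ, (w * z ^ m).re = (z ^ m).re) ↔ w = 1 := by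
  refine ⟨fun h => ?_, by rintro rfl; simp⟩
  have h' : ∀ u : ℂ, (w * u).re = u.re := fun u => by
    obtain ⟨z, rfl⟩ := IsAlgClosed.exists_pow_nat_eq u (Nat.pos_of_ne_zero hm)
    exact h z
  have h1 := h' 1
  have hI := h' I
  simp only [mul_one, mul_re, I_re, I_im, mul_zero, zero_sub, one_re, neg_eq_zero] at h1 hI
  exact Complex.ext h1 hI

lemma forall_re_pow_rotMat_mulVec_iff {m : ℕ} (hm : m ≠ 0) (θ : ℝ) :
    (∀ v, (toComplex (rotMat θ *ᵥ v) ^ m).re = (toComplex v ^ m).re) ↔ exp (θ * I) ^ m = 1 := by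
  simp_rw [toComplex_rotMat_mulVec, mul_pow]
  rw [← toComplex_surjective.forall (p := fun z => (exp (θ * I) ^ m * z ^ m).re = (z ^ m).re)]
  exact forall_re_mul_pow_eq_re_pow_iff hm _

lemma forall_re_pow_rotMat_mul_reflMat_mulVec_iff {m : ℕ} (hm : m ≠ 0) (θ : ℝ) :
    (∀ v, (toComplex ((rotMat θ * reflMat) *ᵥ v) ^ m).re = (toComplex v ^ m).re) ↔
      exp (θ * I) ^ m = 1 := by
  simp_rw [← mulVec_mulVec, toComplex_rotMat_mulVec, toComplex_reflMat_mulVec, mul_pow]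
  rw [← toComplex_surjective.forall
      (p := fun z => (exp (θ * I) ^ m * conj z ^ m).re = (z ^ m).re),
    (Function.Involutive.surjective (f := conj) conj_conj).forall]
  simp_rw [conj_conj, ← map_pow, conj_re]
  exact forall_re_mul_pow_eq_re_pow_iff hm _

lemma exp_mul_I_pow_eq_one_iff_exists_rotMat_eq {m : ℕ} (hm : m ≠ 0) (θ : ℝ) :
    exp (θ * I) ^ m = 1 ↔ ∃ k < m, rotMat θ = rotMat (2 * π * k / m) := by
  have : NeZero m := ⟨hm⟩
  have hζ := isPrimitiveRoot_exp m hm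
  have hpow (k : ℕ) : exp ((2 * π * k / m : ℝ) * I) = exp (2 * π * I / m) ^ k := by
    rw [← Complex.exp_nat_mul]; congr 1; push_cast; field_simp
  simp_rw [rotMat_eq_rotMat_iff, hpow]
  constructor
  · intro h
    obtain ⟨k, hk, e⟩ := hζ.eq_pow_of_pow_eq_one h
    exact ⟨k, hk, e.symm⟩
  · rintro ⟨k, -, e⟩
    rw [e, pow_right_comm, hζ.pow_eq_one, one_pow]

/-- For `m ≥ 1`, an orthogonal transformation `A ∈ O(2)` stabilizes the polynomial
`p_m = Re((x+iy)^m)` if and only if `A` belongs to the dihedral group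
`D_m = ⟨σ_m, τ⟩`, i.e. `A` is one of the rotations by `2πk/m` or one of the
corresponding reflections. -/
theorem stmt5 (m : ℕ) (hm : 1 ≤ m) (p : MvPolynomial (Fin 2) ℝ)
    (hp : ∀ v : Fin 2 → ℝ, eval v p = (((v 0 : ℂ) + (v 1 : ℂ) * Complex.I) ^ m).re)
    (A : Matrix (Fin 2) (Fin 2) ℝ) (hA : A * Aᵀ = 1) :
    (∀ v : Fin 2 → ℝ, eval (A.mulVec v) p = eval v p) ↔
      ∃ k : ℕ, k < m ∧
        (A = rotMat (2 * π * k / m) ∨ A = rotMat (2 * π * k / m) * reflMat) := by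
  have hm0 : m ≠ 0 := by omega
  have hp' : ∀ v, eval v p = (toComplex v ^ m).re := hp
  simp_rw [hp']
  obtain ⟨θ, rfl | rfl⟩ := exists_eq_rotMat_or_eq_rotMat_mul_reflMat hA
  · rw [forall_re_pow_rotMat_mulVec_iff hm0, exp_mul_I_pow_eq_one_iff_exists_rotMat_eq hm0]
    simp [rotMat_ne_rotMat_mul_reflMat]
  · rw [forall_re_pow_rotMat_mul_reflMat_mulVec_iff hm0, exp_mul_I_pow_eq_one_iff_exists_rotMat_eq hm0]
    simp [mul_reflMat_inj, (rotMat_ne_rotMat_mul_reflMat _ _).symm]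
end

section
/- The stabilizer in O(2) of the polynomial x + xy is the trivial subgroup {Id}, and no polynomial of degree < 2 in ℝ[x,y] has trivial stabilizer in O(2). -/
/-!
Comparing `x + xy` with its pullback under `A` at `±e₀`, `±e₁` and `e₀ + e₁` pins down all four
entries of `A`. A polynomial of degree `< 2` is an affine function `c + ⟨w, v⟩`, and the
reflection whose mirror is the line `ℝ w` (any reflection if `w = 0`) fixes `w`, hence
preserves `⟨w, v⟩`; it lies in the stabilizer but is not the identity.
-/

open MvPolynomial Matrix

/-- The stabilizer in `O(2)` of a polynomial `P`, for the action
`(φ·P)(x,y) = P(φ⁻¹(x,y))`. -/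
def polyStab (P : MvPolynomial (Fin 2) ℝ) : Set (Matrix (Fin 2) (Fin 2) ℝ) :=
  {A | A * Aᵀ = 1 ∧ ∀ v : Fin 2 → ℝ, eval (A.mulVec v) P = eval v P}

namespace MvPolynomial

variable {σ R : Type*} [CommSemiring R] [Fintype σ] [DecidableEq σ]

theorem support_subset_of_totalDegree_le_one {P : MvPolynomial σ R} (hP : P.totalDegree ≤ 1) :
    P.support ⊆ insert 0 (Finset.univ.image fun i => Finsupp.single i 1) := by
  intro d hd
  rcases Nat.le_one_iff_eq_zero_or_eq_one.mp ((le_totalDegree hd).trans hP) with h | h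
  · simp [(Finsupp.degree_eq_zero_iff d).mp h]
  · obtain ⟨i, rfl⟩ : d ∈ Set.range fun i : σ => Finsupp.single i 1 := by
      rw [Finsupp.range_single_one]
      exact h
    simp

theorem eval_eq_of_totalDegree_le_one {P : MvPolynomial σ R} (hP : P.totalDegree ≤ 1)
    (v : σ → R) : eval v P = coeff 0 P + (fun i => coeff (Finsupp.single i 1) P) ⬝ᵥ v := by
  conv_lhs => rw [P.as_sum, Finset.sum_subset (support_subset_of_totalDegree_le_one hP)
    (fun d _ hd => by rw [notMem_support_iff.mp hd, monomial_zero])]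
  rw [Finset.sum_insert (by simp),
    Finset.sum_image fun i _ j _ h => Finsupp.single_left_injective one_ne_zero h]
  simp [dotProduct, eval_monomial]

end MvPolynomial

namespace Matrix

variable {n R : Type*} [DecidableEq n] [CommRing R]

def reflectionAlong (u : n → R) : Matrix n n R := (2 : R) • vecMulVec u u - 1

theorem transpose_reflectionAlong (u : n → R) : (reflectionAlong u)ᵀ = reflectionAlong u := by
  rw [reflectionAlong, transpose_sub, transpose_smul, transpose_vecMulVec, transpose_one]

variable [Fintype n]

theorem reflectionAlong_mulVec (u v : n → R) :
    reflectionAlong u *ᵥ v = (2 * (u ⬝ᵥ v)) • u - v := by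
  rw [reflectionAlong, sub_mulVec, smul_mulVec, vecMulVec_mulVec, one_mulVec, op_smul_eq_smul,
    smul_smul]

theorem reflectionAlong_mul_self {u : n → R} (hu : u ⬝ᵥ u = 1) :
    reflectionAlong u * reflectionAlong u = 1 := by
  simp only [reflectionAlong, sub_mul, mul_sub, Matrix.smul_mul, Matrix.mul_smul,
    vecMulVec_mul_vecMulVec, hu, one_smul, Matrix.mul_one, Matrix.one_mul, smul_smul]
  module

theorem smul_dotProduct_reflectionAlong_mulVec {u : n → R} (hu : u ⬝ᵥ u = 1) (c : R)
    (v : n → R) : (c • u) ⬝ᵥ (reflectionAlong u *ᵥ v) = (c • u) ⬝ᵥ v := by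
  rw [reflectionAlong_mulVec, dotProduct_sub, dotProduct_smul, smul_dotProduct, smul_dotProduct,
    hu, smul_eq_mul, smul_eq_mul, smul_eq_mul, dotProduct_comm u v]
  ring

theorem trace_reflectionAlong (u : n → R) :
    trace (reflectionAlong u) = 2 * (u ⬝ᵥ u) - Fintype.card n := by
  rw [reflectionAlong, trace_sub, trace_smul, trace_vecMulVec, trace_one, smul_eq_mul]

theorem reflectionAlong_ne_one [CharZero R] (hn : Fintype.card n ≠ 1) {u : n → R}
    (hu : u ⬝ᵥ u = 1) : reflectionAlong u ≠ 1 := by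
  intro h
  have htrace := congrArg trace h
  rw [trace_reflectionAlong, hu, trace_one, mul_one] at htrace
  have : (2 - Fintype.card n : ℤ) = Fintype.card n := by exact_mod_cast htrace
  omega

end Matrix

theorem exists_dotProduct_self_eq_one_and_eq_smul {n : Type*} [Fintype n] [Nonempty n]
    (w : n → ℝ) : ∃ u : n → ℝ, u ⬝ᵥ u = 1 ∧ ∃ c : ℝ, w = c • u := by
  classical
  rcases eq_or_ne w 0 with rfl | hw
  · exact ⟨Pi.single (Classical.arbitrary n) 1, by simp, 0, by simp⟩
  have hpos : 0 < w ⬝ᵥ w := (Fintype.sum_nonneg fun i => mul_self_nonneg (w i)).lt_of_ne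
    (Ne.symm (mt dotProduct_self_eq_zero.mp hw))
  refine ⟨(√(w ⬝ᵥ w))⁻¹ • w, ?_, √(w ⬝ᵥ w), ?_⟩
  · rw [smul_dotProduct, dotProduct_smul, smul_smul, smul_eq_mul, ← mul_inv,
      Real.mul_self_sqrt hpos.le, inv_mul_cancel₀ hpos.ne']
  · rw [smul_smul, mul_inv_cancel₀ (Real.sqrt_pos.mpr hpos).ne', one_smul]

theorem reflectionAlong_mem_polyStab {P : MvPolynomial (Fin 2) ℝ} (hP : P.totalDegree ≤ 1)
    {u : Fin 2 → ℝ} (hu : u ⬝ᵥ u = 1) {c : ℝ}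
    (hc : (fun i => coeff (Finsupp.single i 1) P) = c • u) : reflectionAlong u ∈ polyStab P := by
  refine ⟨by rw [transpose_reflectionAlong, reflectionAlong_mul_self hu], fun v => ?_⟩
  rw [eval_eq_of_totalDegree_le_one hP, eval_eq_of_totalDegree_le_one hP, hc,
    smul_dotProduct_reflectionAlong_mulVec hu]

theorem eq_one_of_forall_eval_mulVec_X_add_X_mul_X {A : Matrix (Fin 2) (Fin 2) ℝ}
    (h : ∀ v, eval (A *ᵥ v) (X 0 + X 0 * X 1) = eval v (X 0 + X 0 * X 1)) : A = 1 := by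
  have key (s t : ℝ) :
      (A 0 0 * s + A 0 1 * t) * (1 + A 1 0 * s + A 1 1 * t) = s * (1 + t) := by
    have := h ![s, t]
    simp at this
    linear_combination this
  have e₁ := key 1 0
  have e₂ := key (-1) 0
  have e₃ := key 0 1
  have e₄ := key 0 (-1)
  have e₅ := key 1 1
  have ha : A 0 0 = 1 := by linear_combination (e₁ - e₂) / 2
  have hc : A 1 0 = 0 := by rw [ha] at e₁; linarith
  have hb : A 0 1 = 0 := by linear_combination (e₃ - e₄) / 2
  have hd : A 1 1 = 1 := by rw [ha, hb, hc] at e₅; linarith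
  rw [eta_fin_two A, ha, hb, hc, hd, one_fin_two]

/-- The stabilizer in `O(2)` of the polynomial `x + xy` is trivial, and no
polynomial of degree `< 2` has trivial stabilizer in `O(2)`. -/
theorem stmt9 :
    polyStab (X 0 + X 0 * X 1) = {(1 : Matrix (Fin 2) (Fin 2) ℝ)} ∧
      ∀ P : MvPolynomial (Fin 2) ℝ, P.totalDegree < 2 →
        polyStab P ≠ {(1 : Matrix (Fin 2) (Fin 2) ℝ)} := by
  refine ⟨Set.eq_singleton_iff_unique_mem.mpr ⟨⟨by simp, by simp⟩,
    fun A hA => eq_one_of_forall_eval_mulVec_X_add_X_mul_X hA.2⟩, fun P hP hstab => ?_⟩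
  obtain ⟨u, hu, c, hc⟩ :=
    exists_dotProduct_self_eq_one_and_eq_smul fun i => coeff (Finsupp.single i 1) P
  have hmem := reflectionAlong_mem_polyStab (Nat.lt_succ_iff.mp hP) hu hc
  rw [hstab] at hmem
  exact reflectionAlong_ne_one (by simp) hu hmem
end

section
/- The space N_r of normal tensors of order r on an n-dimensional vector space V has dimension C(n+1,2)·C(n+r-1,r) − n·C(n+r,r+1), where N_r is the kernel of the symmetrization map s : S²V* ⊗ S^rV* → V* ⊗ S^{r+1}V* over the last r+1 indices. -/
/-!
Identify `S²V* ⊗ SʳV*` and `V* ⊗ Sʳ⁺¹V*` with arrays of components invariant under permutations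
of the symmetric indices; these are functions on `Sym2 ι × Sym ι r` and on `ι × Sym ι (r + 1)`,
which gives their dimensions. For `r ≥ 1` the symmetrization `s T i K = ∑ₜ T i (K t) (K without t)`
is onto: `S ↦ (S_{i(jk)} + S_{j(ik)}) / r − S'_{ijk} / (r (r + 1))`, with `S'` the symmetrization
of `S` over all `r + 2` indices, is a right inverse. Rank–nullity then computes `dim N_r`.
-/

open Module Function

namespace Sym

variable {α : Type*} {d : ℕ}

def ofFn (k : Fin d → α) : Sym α d := ⟨List.ofFn k, by simp⟩

@[simp] lemma coe_ofFn (k : Fin d → α) : (ofFn k : Multiset α) = List.ofFn k := rfl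

lemma ofFn_comp_perm (k : Fin d → α) (σ : Equiv.Perm (Fin d)) : ofFn (k ∘ σ) = ofFn k :=
  ext <| Multiset.coe_eq_coe.2 (σ.ofFn_comp_perm k)

lemma ofFn_cons (a : α) (k : Fin d → α) : ofFn (Fin.cons a k) = a ::ₛ ofFn k :=
  ext <| by simp [coe_cons]

lemma ofFn_eq_cons_removeNth (k : Fin (d + 1) → α) (t : Fin (d + 1)) :
    ofFn k = k t ::ₛ ofFn (t.removeNth k) := by
  ext1
  simp only [coe_ofFn, coe_cons, ← Fin.univ_val_map, Fin.univ_succAbove d t, Finset.cons_val,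
    Multiset.map_cons, Finset.map_val, Multiset.map_map]
  rfl

lemma ofFn_update (k : Fin (d + 1) → α) (t : Fin (d + 1)) (a : α) :
    ofFn (update k t a) = a ::ₛ ofFn (t.removeNth k) := by
  rw [ofFn_eq_cons_removeNth _ t, update_self, Fin.removeNth_update]

lemma ofFn_surjective : Surjective (ofFn : (Fin d → α) → Sym α d) := by
  induction d with
  | zero => exact fun s => ⟨Fin.elim0, Subsingleton.elim _ _⟩
  | succ d ih =>
    intro s
    obtain ⟨a, s, rfl⟩ := s.exists_eq_cons_of_succ
    obtain ⟨k, rfl⟩ := ih s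
    exact ⟨Fin.cons a k, ofFn_cons a k⟩

lemma exists_perm_of_ofFn_eq {k k' : Fin d → α} (h : ofFn k = ofFn k') :
    ∃ σ : Equiv.Perm (Fin d), k = k' ∘ σ := by
  -- compare the sorted tuples, for an arbitrary linear order on `α`
  let : LinearOrder α := IsWellOrder.linearOrder WellOrderingRel
  have hsort : k ∘ Tuple.sort k = k' ∘ Tuple.sort k' := by
    refine List.ofFn_injective (List.Perm.eq_of_sortedLE (Tuple.monotone_sort k).sortedLE_ofFn
      (Tuple.monotone_sort k').sortedLE_ofFn ?_)
    have hperm : (List.ofFn k).Perm (List.ofFn k') := Multiset.coe_eq_coe.1 (congrArg Subtype.val h)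
    exact ((Tuple.sort k).ofFn_comp_perm k).trans
      (hperm.trans ((Tuple.sort k').ofFn_comp_perm k').symm)
  refine ⟨(Tuple.sort k).symm.trans (Tuple.sort k'), funext fun x => ?_⟩
  simpa using congrFun hsort ((Tuple.sort k).symm x)

lemma factorsThrough_ofFn_iff {β : Type*} {F : (Fin d → α) → β} :
    F.FactorsThrough ofFn ↔ ∀ k (σ : Equiv.Perm (Fin d)), F (k ∘ σ) = F k := by
  refine ⟨fun h k σ => h (ofFn_comp_perm k σ), fun h k k' hk => ?_⟩
  obtain ⟨σ, rfl⟩ := exists_perm_of_ofFn_eq hk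
  exact h k' σ

end Sym

theorem Function.factorsThrough_prodMap_iff {A A' B B' γ : Type*} {f : A → A'} {g : B → B'}
    {F : A × B → γ} :
    F.FactorsThrough (Prod.map f g) ↔
      (∀ b, (fun a => F (a, b)).FactorsThrough f) ∧ ∀ a, (fun b => F (a, b)).FactorsThrough g := by
  refine ⟨fun h => ⟨fun b a a' ha => h (by simp [ha]), fun a b b' hb => h (by simp [hb])⟩, ?_⟩
  rintro ⟨hf, hg⟩ ⟨a, b⟩ ⟨a', b'⟩ h
  simp only [Prod.map, Prod.mk.injEq] at h
  exact (hf b h.1).trans (hg a' h.2)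

theorem Sym2.factorsThrough_uncurry_mk_iff {α β : Type*} {F : α → α → β} :
    (uncurry F).FactorsThrough (uncurry Sym2.mk) ↔ ∀ a b, F a b = F b a := by
  refine ⟨fun h a b => @h (a, b) (b, a) Sym2.eq_swap, fun h ⟨a, b⟩ ⟨c, d⟩ hs => ?_⟩
  rcases Sym2.eq_iff.1 hs with ⟨rfl, rfl⟩ | ⟨rfl, rfl⟩
  · rfl
  · exact h a b

theorem LinearMap.mem_range_funLeft_iff {R M X Y : Type*} [Semiring R] [AddCommMonoid M]
    [Module R M] {q : X → Y} {g : X → M} :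
    g ∈ range (funLeft R M q) ↔ g.FactorsThrough q := by
  refine ⟨?_, fun hg => ⟨extend q g 0, funext (hg.extend_apply 0)⟩⟩
  rintro ⟨h, rfl⟩ a b hab
  simp [funLeft_apply, hab]

theorem finrank_eq_card_of_factorsThrough {K M X Y : Type*} [Ring K] [StrongRankCondition K]
    [AddCommGroup M] [Module K M] [Fintype Y] (P : Submodule K M) (e : M ≃ₗ[K] (X → K)) {q : X → Y}
    (hq : Surjective q) (hP : ∀ x, x ∈ P ↔ (e x).FactorsThrough q) :
    finrank K P = Fintype.card Y := by
  have hmap : P.map (e : M →ₗ[K] X → K) = LinearMap.range (LinearMap.funLeft K K q) := by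
    ext g
    rw [LinearMap.mem_range_funLeft_iff, ← e.apply_symm_apply g, ← hP]
    simp
  rw [← e.finrank_map_eq P, hmap, LinearMap.finrank_range_of_inj
    (LinearMap.funLeft_injective_of_surjective _ _ _ hq), finrank_fintype_fun_eq_card]

theorem Submodule.finrank_inf_ker_add_finrank_map {K M M' : Type*} [DivisionRing K]
    [AddCommGroup M] [Module K M] [AddCommGroup M'] [Module K M'] (p : Submodule K M)
    [FiniteDimensional K p] (f : M →ₗ[K] M') :
    finrank K ↥(p ⊓ LinearMap.ker f) + finrank K (p.map f) = finrank K p := by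
  rw [← LinearMap.finrank_range_add_finrank_ker (f.domRestrict p), LinearMap.range_domRestrict,
    LinearMap.ker_domRestrict, ← map_comap_subtype, finrank_map_subtype_eq, add_comm]

namespace NormalTensor

section symmetrize

variable {ι M : Type*} [AddCommMonoid M] {d : ℕ}

def symmetrize (F : ι → (Fin d → ι) → M) (k : Fin (d + 1) → ι) : M :=
  ∑ t, F (k t) (t.removeNth k)

theorem symmetrize_cons (F : ι → (Fin (d + 1) → ι) → M) (i : ι) (k : Fin (d + 1) → ι) :
    symmetrize F (Fin.cons i k) = F i k + ∑ t, F (k t) (Fin.cons i (t.removeNth k)) := by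
  rw [symmetrize, Fin.sum_univ_succ, Fin.cons_zero, Fin.removeNth_zero, Fin.tail_cons]
  congr 1
  exact Finset.sum_congr rfl fun t _ => congrArg _ (Fin.cons_comp_succ_succAbove i k t)

theorem factorsThrough_symmetrize {F : ι → (Fin d → ι) → M}
    (hF : ∀ i, (F i).FactorsThrough Sym.ofFn) : (symmetrize F).FactorsThrough Sym.ofFn := by
  intro k k' hk
  obtain ⟨σ, rfl⟩ := Sym.exists_perm_of_ofFn_eq hk
  refine (Finset.sum_congr rfl fun t _ => hF _ ?_).trans
    (Equiv.sum_comp σ fun t => F (k' t) (t.removeNth k'))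
  rw [← Sym.cons_inj_right (k' (σ t))]
  exact ((Sym.ofFn_eq_cons_removeNth (k' ∘ σ) t).symm.trans hk).trans
    (Sym.ofFn_eq_cons_removeNth k' (σ t))

end symmetrize

variable (K ι : Type*) [Field K]

-- `V* ⊗ SᵈV*`, as arrays of components
def linSymTensors (d : ℕ) : Submodule K (ι → (Fin d → ι) → K) where
  carrier := {S | ∀ i, (S i).FactorsThrough Sym.ofFn}
  add_mem' hS hT i _ _ h := by simp [hS i h, hT i h]
  zero_mem' _ _ _ _ := rfl
  smul_mem' c _ hS i _ _ h := by simp [hS i h]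

-- `S²V* ⊗ SᵈV*`, as arrays of components
def sym2SymTensors (d : ℕ) : Submodule K (ι → ι → (Fin d → ι) → K) where
  carrier := {T | (∀ i j k, T i j k = T j i k) ∧ ∀ i j, (T i j).FactorsThrough Sym.ofFn}
  add_mem' hS hT := ⟨fun i j k => by simp [hS.1 i j k, hT.1 i j k],
    fun i j _ _ h => by simp [hS.2 i j h, hT.2 i j h]⟩
  zero_mem' := ⟨fun _ _ _ => rfl, fun _ _ _ _ _ => rfl⟩
  smul_mem' c _ hT := ⟨fun i j k => by simp [hT.1 i j k], fun i j _ _ h => by simp [hT.2 i j h]⟩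

variable {K ι}

theorem finrank_linSymTensors [Fintype ι] [DecidableEq ι] (d : ℕ) :
    finrank K (linSymTensors K ι d) = Fintype.card ι * (Fintype.card ι + d - 1).choose d := by
  rw [finrank_eq_card_of_factorsThrough _ (LinearEquiv.curry K K ι (Fin d → ι)).symm
    (surjective_id.prodMap Sym.ofFn_surjective), Fintype.card_prod, Sym.card_sym_eq_choose]
  intro S
  simp only [LinearEquiv.coe_curry_symm, factorsThrough_prodMap_iff, injective_id.factorsThrough,
    implies_true, true_and]
  rfl

theorem finrank_sym2SymTensors [Fintype ι] [DecidableEq ι] (d : ℕ) :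
    finrank K (sym2SymTensors K ι d) =
      (Fintype.card ι + 1).choose 2 * (Fintype.card ι + d - 1).choose d := by
  rw [finrank_eq_card_of_factorsThrough _ ((LinearEquiv.curry K (_ → K) ι ι).symm ≪≫ₗ
    (LinearEquiv.curry K K (ι × ι) (Fin d → ι)).symm)
    (Sym2.mk_surjective.prodMap Sym.ofFn_surjective), Fintype.card_prod, Sym2.card,
    Sym.card_sym_eq_choose]
  intro T
  simp only [LinearEquiv.trans_apply, LinearEquiv.coe_curry_symm, factorsThrough_prodMap_iff]
  exact ⟨fun ⟨hT, hk⟩ => ⟨fun k => Sym2.factorsThrough_uncurry_mk_iff.2 (hT · · k),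
      fun p => hk p.1 p.2⟩,
    fun ⟨hT, hk⟩ => ⟨fun i j k =>
      (Sym2.factorsThrough_uncurry_mk_iff (F := (T · · k))).1 (hT k) i j, fun i j => hk (i, j)⟩⟩

variable (K ι) in
def symmetrizeLast (d : ℕ) : (ι → ι → (Fin d → ι) → K) →ₗ[K] (ι → (Fin (d + 1) → ι) → K) where
  toFun T i := symmetrize (T i)
  map_add' T T' := by ext; simp [symmetrize, Finset.sum_add_distrib]
  map_smul' c T := by ext; simp [symmetrize, Finset.mul_sum]

theorem symmetrizeLast_apply {d : ℕ} (T : ι → ι → (Fin d → ι) → K) (i : ι) :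
    symmetrizeLast K ι d T i = symmetrize (T i) := rfl

theorem symmetrizeLast_mem_linSymTensors {d : ℕ} {T : ι → ι → (Fin d → ι) → K}
    (hT : T ∈ sym2SymTensors K ι d) : symmetrizeLast K ι d T ∈ linSymTensors K ι (d + 1) :=
  fun i => factorsThrough_symmetrize (hT.2 i)

theorem symmetrizeLast_cons {d : ℕ} {T : ι → ι → (Fin (d + 1) → ι) → K}
    (hT : T ∈ sym2SymTensors K ι (d + 1)) (i j : ι) (k : Fin (d + 1) → ι) :
    symmetrizeLast K ι (d + 1) T i (Fin.cons j k) =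
      T i j k + ∑ t, T i (k t) (update k t j) := by
  rw [symmetrizeLast_apply, symmetrize_cons]
  refine congrArg _ (Finset.sum_congr rfl fun t _ => hT.2 _ _ ?_)
  rw [Sym.ofFn_cons, Sym.ofFn_update]

theorem symmetrizeLast_eq_zero_iff {d : ℕ} {T : ι → ι → (Fin (d + 1) → ι) → K}
    (hT : T ∈ sym2SymTensors K ι (d + 1)) :
    symmetrizeLast K ι (d + 1) T = 0 ↔
      ∀ i j k, T i j k + ∑ t, T i (k t) (update k t j) = 0 := by
  simp only [funext_iff, Pi.zero_apply, ← symmetrizeLast_cons hT]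
  exact forall_congr' fun i => ⟨fun h j k => h _, fun h k => Fin.cons_self_tail k ▸ h _ _⟩

def symmetrizeLastInv {d : ℕ} (S : ι → (Fin (d + 1) → ι) → K) : ι → ι → (Fin d → ι) → K :=
  fun i j k => (d : K)⁻¹ * (S i (Fin.cons j k) + S j (Fin.cons i k)) -
    ((d : K) * (d + 1))⁻¹ * symmetrize S (Fin.cons i (Fin.cons j k))

theorem symmetrizeLastInv_mem {d : ℕ} {S : ι → (Fin (d + 1) → ι) → K}
    (hS : S ∈ linSymTensors K ι (d + 1)) : symmetrizeLastInv S ∈ sym2SymTensors K ι d := by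
  have hsym := factorsThrough_symmetrize hS
  refine ⟨fun i j k => ?_, fun i j k k' hk => ?_⟩
  · have hswap : Sym.ofFn (Fin.cons i (Fin.cons j k)) = Sym.ofFn (Fin.cons j (Fin.cons i k)) := by
      simp only [Sym.ofFn_cons]
      exact Sym.cons_swap _ _ _
    rw [symmetrizeLastInv, symmetrizeLastInv, add_comm (S i _), hsym hswap]
  · have hcons : ∀ a, Sym.ofFn (Fin.cons a k) = Sym.ofFn (Fin.cons a k') := by
      simp [Sym.ofFn_cons, hk]
    simp only [symmetrizeLastInv, hS _ (hcons _), hsym (a := Fin.cons i (Fin.cons j k))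
      (b := Fin.cons i (Fin.cons j k')) (by simp [Sym.ofFn_cons, hk])]

theorem symmetrizeLast_symmetrizeLastInv [CharZero K] {d : ℕ} (hd : d ≠ 0)
    {S : ι → (Fin (d + 1) → ι) → K} (hS : S ∈ linSymTensors K ι (d + 1)) :
    symmetrizeLast K ι d (symmetrizeLastInv S) = S := by
  ext i k
  have hsym := factorsThrough_symmetrize hS
  have hk : ∀ t, Sym.ofFn (Fin.cons (k t) (t.removeNth k)) = Sym.ofFn k := fun t => by
    rw [Sym.ofFn_cons, ← Sym.ofFn_eq_cons_removeNth]
  set A := fun t => S (k t) (Fin.cons i (t.removeNth k))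
  have hterm : ∀ t, symmetrizeLastInv S i (k t) (t.removeNth k) =
      (d : K)⁻¹ * (S i k + A t) - ((d : K) * (d + 1))⁻¹ * (S i k + ∑ t, A t) := fun t => by
    rw [symmetrizeLastInv, hS i (hk t), ← symmetrize_cons,
      hsym (b := Fin.cons i k) (by rw [Sym.ofFn_cons, hk, ← Sym.ofFn_cons])]
  have hd' : (d : K) ≠ 0 := Nat.cast_ne_zero.2 hd
  -- summed over `t`, the terms `A t` cancel
  rw [symmetrizeLast_apply, symmetrize, Finset.sum_congr rfl fun t _ => hterm t]
  simp only [Finset.sum_sub_distrib, ← Finset.mul_sum, Finset.sum_add_distrib, Finset.sum_const,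
    Finset.card_univ, Fintype.card_fin, nsmul_eq_mul]
  field_simp
  push_cast
  ring

variable (K ι) in
def normalTensors (r : ℕ) : Submodule K (ι → ι → (Fin r → ι) → K) :=
  sym2SymTensors K ι r ⊓ LinearMap.ker (symmetrizeLast K ι r)

theorem mem_normalTensors_iff {d : ℕ} (T : ι → ι → (Fin (d + 1) → ι) → K) :
    T ∈ normalTensors K ι (d + 1) ↔
      (∀ i j k, T i j k = T j i k) ∧
      (∀ i j k (σ : Equiv.Perm (Fin (d + 1))), T i j (k ∘ σ) = T i j k) ∧
      ∀ i j k, T i j k + ∑ t, T i (k t) (update k t j) = 0 := by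
  constructor
  · rintro ⟨hT, hker⟩
    exact ⟨hT.1, fun i j => Sym.factorsThrough_ofFn_iff.1 (hT.2 i j),
      (symmetrizeLast_eq_zero_iff hT).1 hker⟩
  · rintro ⟨hswap, hperm, hcyclic⟩
    have hT : T ∈ sym2SymTensors K ι (d + 1) :=
      ⟨hswap, fun i j => Sym.factorsThrough_ofFn_iff.2 (hperm i j)⟩
    exact ⟨hT, (symmetrizeLast_eq_zero_iff hT).2 hcyclic⟩

theorem map_symmetrizeLast_sym2SymTensors [CharZero K] {d : ℕ} (hd : d ≠ 0) :
    (sym2SymTensors K ι d).map (symmetrizeLast K ι d) = linSymTensors K ι (d + 1) :=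
  le_antisymm (Submodule.map_le_iff_le_comap.2 fun _ => symmetrizeLast_mem_linSymTensors)
    fun _ hS => ⟨_, symmetrizeLastInv_mem hS, symmetrizeLast_symmetrizeLastInv hd hS⟩

theorem finrank_normalTensors_add [CharZero K] [Fintype ι] [DecidableEq ι] {r : ℕ} (hr : r ≠ 0) :
    finrank K (normalTensors K ι r) + Fintype.card ι * (Fintype.card ι + r).choose (r + 1) =
      (Fintype.card ι + 1).choose 2 * (Fintype.card ι + r - 1).choose r := by
  rw [← finrank_sym2SymTensors (K := K) (ι := ι) r,
    ← (sym2SymTensors K ι r).finrank_inf_ker_add_finrank_map (symmetrizeLast K ι r),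
    map_symmetrizeLast_sym2SymTensors hr, finrank_linSymTensors, Nat.add_succ_sub_one]
  rfl

end NormalTensor

/-- The space `N_r` of normal tensors of order `r ≥ 1` in dimension `n` — the space
of `(r+2)`-covariant tensors (given here by their components) which are symmetric in
the first two indices, symmetric in the last `r` indices, and whose cyclic sum over
the last `r+1` indices vanishes — has dimension
`C(n+1,2)·C(n+r-1,r) − n·C(n+r,r+1)`. -/
theorem stmt10 (n r : ℕ) (hr : 1 ≤ r)
    (N : Submodule ℝ (Fin n → Fin n → (Fin r → Fin n) → ℝ))
    (hN : ∀ T, T ∈ N ↔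
      (∀ i j k, T i j k = T j i k) ∧
      (∀ (i j : Fin n) (k : Fin r → Fin n) (σ : Equiv.Perm (Fin r)),
        T i j (k ∘ σ) = T i j k) ∧
      (∀ (i j : Fin n) (k : Fin r → Fin n),
        T i j k + ∑ t : Fin r, T i (k t) (Function.update k t j) = 0)) :
    Module.finrank ℝ N + n * Nat.choose (n + r) (r + 1) =
      Nat.choose (n + 1) 2 * Nat.choose (n + r - 1) r := by
  obtain ⟨d, rfl⟩ : ∃ d, r = d + 1 := ⟨r - 1, by omega⟩
  have hN' : N = NormalTensor.normalTensors ℝ (Fin n) (d + 1) :=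
    Submodule.ext fun T => (hN T).trans (NormalTensor.mem_normalTensors_iff T).symm
  subst hN'
  simpa using NormalTensor.finrank_normalTensors_add (K := ℝ) (ι := Fin n) d.succ_ne_zero
end

section
/- Let G be a compact Lie group acting on each space X_r of an inverse system ⋯ → X_{r+1} → X_r → ⋯ → X_1 of G-equivariant continuous maps. Then the natural map (lim← X_r)/G → lim← (X_r/G), [(…,x_2,x_1)] ↦ (…,[x_2],[x_1]), is a bijection. -/
/-!
Injectivity: for compatible `x, x'` the sets `{g | g • x r = x' r}` are closed, nonempty and
decreasing in `r` (by equivariance of the bonding maps), so by compactness of `G` they have a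
common point. Surjectivity needs no topology: if `g r • f r (y (r + 1)) = y r`, then the
partial products `c r = g 0 * ⋯ * g (r - 1)` make `r ↦ c r • y r` a compatible sequence.
-/

theorem exists_forall_smul_eq_of_forall_exists_smul_eq {G : Type*} [Monoid G]
    [TopologicalSpace G] [CompactSpace G] {X : ℕ → Type*} [∀ r, TopologicalSpace (X r)]
    [∀ r, T2Space (X r)] [∀ r, MulAction G (X r)] [∀ r, ContinuousSMul G (X r)]
    {f : ∀ r, X (r + 1) → X r} (hf : ∀ (r : ℕ) (g : G) (x : X (r + 1)), f r (g • x) = g • f r x)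
    {x x' : ∀ r, X r} (hx : ∀ r, f r (x (r + 1)) = x r) (hx' : ∀ r, f r (x' (r + 1)) = x' r)
    (h : ∀ r, ∃ g : G, g • x r = x' r) : ∃ g : G, ∀ r, g • x r = x' r := by
  let transporter : ℕ → Set G := fun r => {g | g • x r = x' r}
  have closed r : IsClosed (transporter r) :=
    isClosed_eq (continuous_id.smul continuous_const) continuous_const
  have decreasing r : transporter (r + 1) ⊆ transporter r := fun g (hg : g • _ = _) =>
    show g • x r = x' r by rw [← hx, ← hf, hg, hx']
  obtain ⟨g, hg⟩ := IsCompact.nonempty_iInter_of_sequence_nonempty_isCompact_isClosed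
    transporter decreasing h (closed 0).isCompact closed
  exact ⟨g, Set.mem_iInter.mp hg⟩

theorem exists_compatible_smul_eq_of_forall_exists_smul_eq {G : Type*} [Group G]
    {X : ℕ → Type*} [∀ r, MulAction G (X r)] {f : ∀ r, X (r + 1) → X r}
    (hf : ∀ (r : ℕ) (g : G) (x : X (r + 1)), f r (g • x) = g • f r x) {y : ∀ r, X r}
    (hy : ∀ r, ∃ g : G, g • f r (y (r + 1)) = y r) :
    ∃ x : ∀ r, X r, (∀ r, f r (x (r + 1)) = x r) ∧ ∀ r, ∃ g : G, g • x r = y r := by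
  choose g hg using hy
  let c : ℕ → G := fun r => Nat.rec 1 (fun r c => c * g r) r
  refine ⟨fun r => c r • y r, fun r => ?_, fun r => ⟨(c r)⁻¹, inv_smul_smul _ _⟩⟩
  change f r ((c r * g r) • y (r + 1)) = c r • y r
  rw [mul_smul, hf, hf, hg]

theorem stmt14_general
    {G : Type*} [TopologicalSpace G] [Group G] [CompactSpace G]
    (X : ℕ → Type*) [∀ r, TopologicalSpace (X r)] [∀ r, T2Space (X r)]
    [∀ r, MulAction G (X r)] [∀ r, ContinuousSMul G (X r)]
    (f : ∀ r, X (r + 1) → X r)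
    (hfe : ∀ (r : ℕ) (g : G) (x : X (r + 1)), f r (g • x) = g • f r x) :
    (∀ x x' : ∀ r, X r, (∀ r, f r (x (r + 1)) = x r) →
        (∀ r, f r (x' (r + 1)) = x' r) →
        (∀ r, ∃ g : G, g • x r = x' r) → ∃ g : G, ∀ r, g • x r = x' r) ∧
      (∀ y : ∀ r, X r, (∀ r, ∃ g : G, g • f r (y (r + 1)) = y r) →
        ∃ x : ∀ r, X r, (∀ r, f r (x (r + 1)) = x r) ∧
          ∀ r, ∃ g : G, g • x r = y r) :=
  ⟨fun _ _ hx hx' h => exists_forall_smul_eq_of_forall_exists_smul_eq hfe hx hx' h,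
    fun _ hy => exists_compatible_smul_eq_of_forall_exists_smul_eq hfe hy⟩

/-- Let `G` be a compact Lie group acting continuously on each space of an inverse
system `⋯ → X_{r+1} → X_r → ⋯` of `G`-equivariant continuous maps between Hausdorff
spaces. Then the natural map `(lim← X_r)/G → lim← (X_r/G)` is a bijection:
(injectivity) two compatible sequences whose terms are pairwise in the same orbit
lie in the same orbit for the diagonal action, and (surjectivity) every compatible
sequence of orbits is the image of a compatible sequence of points. -/
theorem stmt14 {E : Type*} [NormedAddCommGroup E] [NormedSpace ℝ E]
    [FiniteDimensional ℝ E]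
    {H : Type*} [TopologicalSpace H] (I : ModelWithCorners ℝ E H)
    {G : Type*} [TopologicalSpace G] [ChartedSpace H G] [Group G]
    [LieGroup I (⊤ : ℕ∞) G] [CompactSpace G]
    (X : ℕ → Type*) [∀ r, TopologicalSpace (X r)] [∀ r, T2Space (X r)]
    [∀ r, MulAction G (X r)] [∀ r, ContinuousSMul G (X r)]
    (f : ∀ r, X (r + 1) → X r) (hfc : ∀ r, Continuous (f r))
    (hfe : ∀ (r : ℕ) (g : G) (x : X (r + 1)), f r (g • x) = g • f r x) :
    (∀ x x' : ∀ r, X r, (∀ r, f r (x (r + 1)) = x r) →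
        (∀ r, f r (x' (r + 1)) = x' r) →
        (∀ r, ∃ g : G, g • x r = x' r) → ∃ g : G, ∀ r, g • x r = x' r) ∧
      (∀ y : ∀ r, X r, (∀ r, ∃ g : G, g • f r (y (r + 1)) = y r) →
        ∃ x : ∀ r, X r, (∀ r, f r (x (r + 1)) = x r) ∧
          ∀ r, ∃ g : G, g • x r = y r) :=
  stmt14_general X f hfe
end

section
/- The linear map Aut(j^r_{x_0} g) → O(T_{x_0}X, g_{x_0}) sending the (r+1)-jet of an automorphism τ to its tangent map τ_{*,x_0} is an injective group homomorphism: any two germs of diffeomorphisms fixing x_0 that both preserve j^r_{x_0} g and have equal differentials at x_0 have equal (r+1)-jets. -/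
open scoped BigOperators

/-- The coefficients of the pullback metric `τ*g` of a metric `g` (given by its
coefficient functions in a chart) along a smooth map `τ`:
`(τ*g)_{ij}(x) = ∑_{a,b} g_{ab}(τ x) ∂_i τ^a(x) ∂_j τ^b(x)`. -/
noncomputable def pullbackMetric (n : ℕ) (g : Fin n → Fin n → (Fin n → ℝ) → ℝ)
    (τ : (Fin n → ℝ) → (Fin n → ℝ)) (i j : Fin n) (x : Fin n → ℝ) : ℝ :=
  ∑ a : Fin n, ∑ b : Fin n, g a b (τ x) *
    fderiv ℝ (fun y => τ y a) x (Pi.single i 1) *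
    fderiv ℝ (fun y => τ y b) x (Pi.single j 1)

universe u

section AuxJets
open ContinuousLinearMap (compL)
variable {E : Type u} [NormedAddCommGroup E] [NormedSpace ℝ E]

theorem fderiv_iFD {F : Type*} [NormedAddCommGroup F] [NormedSpace ℝ F]
    (f : E → F) (k : ℕ) (x : E) (m : Fin k → E) (w : E) :
    iteratedFDeriv ℝ k (fderiv ℝ f) x m w = iteratedFDeriv ℝ (k+1) f x (Fin.snoc m w) := by
  rw [iteratedFDeriv_succ_apply_right, Fin.init_snoc, Fin.snoc_last]

theorem jet_val {F : Type*} [NormedAddCommGroup F] [NormedSpace ℝ F] {f g : E → F}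
    (h : iteratedFDeriv ℝ 0 f 0 = iteratedFDeriv ℝ 0 g 0) : f 0 = g 0 := by
  have h0 := congrFun (congrArg DFunLike.coe h) (fun _ => (0:E))
  simpa using h0

theorem eqjet_fderiv {F : Type*} [NormedAddCommGroup F] [NormedSpace ℝ F] {f g : E → F} {s : ℕ}
    (h : ∀ k ≤ s + 1, iteratedFDeriv ℝ k f 0 = iteratedFDeriv ℝ k g 0) :
    ∀ k ≤ s, iteratedFDeriv ℝ k (fderiv ℝ f) 0 = iteratedFDeriv ℝ k (fderiv ℝ g) 0 := by
  intro k hk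
  ext m w
  rw [fderiv_iFD, fderiv_iFD, h (k+1) (by omega)]

theorem smooth_fderiv {F : Type*} [NormedAddCommGroup F] [NormedSpace ℝ F] {f : E → F}
    (hf : ContDiff ℝ (⊤ : ℕ∞) f) : ContDiff ℝ (⊤ : ℕ∞) (fderiv ℝ f) :=
  hf.fderiv_right (le_of_eq (by simp))

theorem smooth_bilin {F G H : Type*} [NormedAddCommGroup F] [NormedSpace ℝ F]
    [NormedAddCommGroup G] [NormedSpace ℝ G] [NormedAddCommGroup H] [NormedSpace ℝ H]
    (B : F →L[ℝ] G →L[ℝ] H) {u : E → F} {v : E → G}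
    (hu : ContDiff ℝ (⊤ : ℕ∞) u) (hv : ContDiff ℝ (⊤ : ℕ∞) v) :
    ContDiff ℝ (⊤ : ℕ∞) (fun x => B (u x) (v x)) :=
  ((B.contDiff).comp hu).clm_apply hv

theorem fderiv_bilin_eq {F G H : Type*} [NormedAddCommGroup F] [NormedSpace ℝ F]
    [NormedAddCommGroup G] [NormedSpace ℝ G] [NormedAddCommGroup H] [NormedSpace ℝ H]
    (B : F →L[ℝ] G →L[ℝ] H) {u : E → F} {v : E → G}
    (hu : ContDiff ℝ (⊤ : ℕ∞) u) (hv : ContDiff ℝ (⊤ : ℕ∞) v) :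
    fderiv ℝ (fun x => B (u x) (v x)) = fun x =>
      ((compL ℝ E G H).comp B) (u x) (fderiv ℝ v x)
        + ((compL ℝ E F H).comp B.flip) (v x) (fderiv ℝ u x) := by
  funext x
  have hdu : DifferentiableAt ℝ u x := (hu.differentiable (by simp)).differentiableAt
  have hdv : DifferentiableAt ℝ v x := (hv.differentiable (by simp)).differentiableAt
  have hc : DifferentiableAt ℝ (fun x => B (u x)) x :=
    (B.differentiable.differentiableAt).comp x hdu
  have h1 : fderiv ℝ (fun x => B (u x) (v x)) x
      = (B (u x)).comp (fderiv ℝ v x) + (fderiv ℝ (fun x => B (u x)) x).flip (v x) :=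
    fderiv_clm_apply hc hdv
  have h2 : fderiv ℝ (fun x => B (u x)) x = B.comp (fderiv ℝ u x) :=
    (B.hasFDerivAt.comp x hdu.hasFDerivAt).fderiv
  rw [h1, h2]
  rfl

theorem eqjet_bilin (s : ℕ) :
    ∀ {F G H : Type u} [NormedAddCommGroup F] [NormedSpace ℝ F] [NormedAddCommGroup G]
      [NormedSpace ℝ G] [NormedAddCommGroup H] [NormedSpace ℝ H]
      (B : F →L[ℝ] G →L[ℝ] H) {u₁ u₂ : E → F} {v₁ v₂ : E → G},
      ContDiff ℝ (⊤ : ℕ∞) u₁ → ContDiff ℝ (⊤ : ℕ∞) u₂ → ContDiff ℝ (⊤ : ℕ∞) v₁ → ContDiff ℝ (⊤ : ℕ∞) v₂ →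
      (∀ k ≤ s, iteratedFDeriv ℝ k u₁ 0 = iteratedFDeriv ℝ k u₂ 0) →
      (∀ k ≤ s, iteratedFDeriv ℝ k v₁ 0 = iteratedFDeriv ℝ k v₂ 0) →
      ∀ k ≤ s, iteratedFDeriv ℝ k (fun x => B (u₁ x) (v₁ x)) 0
        = iteratedFDeriv ℝ k (fun x => B (u₂ x) (v₂ x)) 0 := by
  induction s with
  | zero =>
    intro F G H _ _ _ _ _ _ B u₁ u₂ v₁ v₂ hu₁ hu₂ hv₁ hv₂ hu hv k hk
    obtain rfl : k = 0 := by omega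
    ext m
    simp only [iteratedFDeriv_zero_apply]
    rw [jet_val (hu 0 le_rfl), jet_val (hv 0 le_rfl)]
  | succ s IH =>
    intro F G H _ _ _ _ _ _ B u₁ u₂ v₁ v₂ hu₁ hu₂ hv₁ hv₂ hu hv k hk
    match k, hk with
    | 0, _ =>
      ext m
      simp only [iteratedFDeriv_zero_apply]
      rw [jet_val (hu 0 (by omega)), jet_val (hv 0 (by omega))]
    | (k+1), hk =>
      have hfd : ∀ k ≤ s, iteratedFDeriv ℝ k (fderiv ℝ (fun x => B (u₁ x) (v₁ x))) 0
          = iteratedFDeriv ℝ k (fderiv ℝ (fun x => B (u₂ x) (v₂ x))) 0 := by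
        rw [fderiv_bilin_eq B hu₁ hv₁, fderiv_bilin_eq B hu₂ hv₂]
        intro k hk
        have e1 := IH ((compL ℝ E G H).comp B) hu₁ hu₂ (smooth_fderiv hv₁) (smooth_fderiv hv₂)
          (fun k hk => hu k (by omega)) (eqjet_fderiv hv) k hk
        have e2 := IH ((compL ℝ E F H).comp B.flip) hv₁ hv₂ (smooth_fderiv hu₁)
          (smooth_fderiv hu₂) (fun k hk => hv k (by omega)) (eqjet_fderiv hu) k hk
        have c11 : ContDiff ℝ k (fun x => ((compL ℝ E G H).comp B) (u₁ x) (fderiv ℝ v₁ x)) :=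
          (smooth_bilin _ hu₁ (smooth_fderiv hv₁)).of_le (by exact_mod_cast le_top)
        have c12 : ContDiff ℝ k (fun x => ((compL ℝ E F H).comp B.flip) (v₁ x) (fderiv ℝ u₁ x)) :=
          (smooth_bilin _ hv₁ (smooth_fderiv hu₁)).of_le (by exact_mod_cast le_top)
        have c21 : ContDiff ℝ k (fun x => ((compL ℝ E G H).comp B) (u₂ x) (fderiv ℝ v₂ x)) :=
          (smooth_bilin _ hu₂ (smooth_fderiv hv₂)).of_le (by exact_mod_cast le_top)
        have c22 : ContDiff ℝ k (fun x => ((compL ℝ E F H).comp B.flip) (v₂ x) (fderiv ℝ u₂ x)) :=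
          (smooth_bilin _ hv₂ (smooth_fderiv hu₂)).of_le (by exact_mod_cast le_top)
        rw [iteratedFDeriv_add_apply' c11.contDiffAt c12.contDiffAt, iteratedFDeriv_add_apply' c21.contDiffAt c22.contDiffAt, e1, e2]
      ext m
      have h1 := fderiv_iFD (fun x => B (u₁ x) (v₁ x)) k 0 (Fin.init m) (m (Fin.last k))
      have h2 := fderiv_iFD (fun x => B (u₂ x) (v₂ x)) k 0 (Fin.init m) (m (Fin.last k))
      rw [Fin.snoc_init_self] at h1 h2
      rw [← h1, ← h2, hfd k (by omega)]

theorem leading (s : ℕ) :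
    ∀ {F G H : Type u} [NormedAddCommGroup F] [NormedSpace ℝ F] [NormedAddCommGroup G]
      [NormedSpace ℝ G] [NormedAddCommGroup H] [NormedSpace ℝ H]
      (B : F →L[ℝ] G →L[ℝ] H) (u : E → F) (v₁ v₂ : E → G),
      ContDiff ℝ (⊤ : ℕ∞) u → ContDiff ℝ (⊤ : ℕ∞) v₁ → ContDiff ℝ (⊤ : ℕ∞) v₂ →
      (∀ k < s, iteratedFDeriv ℝ k v₁ 0 = iteratedFDeriv ℝ k v₂ 0) →
      ∀ m : Fin s → E,
      iteratedFDeriv ℝ s (fun x => B (u x) (v₁ x)) 0 m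
        - iteratedFDeriv ℝ s (fun x => B (u x) (v₂ x)) 0 m
        = B (u 0) (iteratedFDeriv ℝ s v₁ 0 m - iteratedFDeriv ℝ s v₂ 0 m) := by
  induction s with
  | zero =>
    intro F G H _ _ _ _ _ _ B u v₁ v₂ hu hv₁ hv₂ h m
    simp only [iteratedFDeriv_zero_apply]
    rw [map_sub]
  | succ s IH =>
    intro F G H _ _ _ _ _ _ B u v₁ v₂ hu hv₁ hv₂ h m
    -- peel the last slot
    have p1 := fderiv_iFD (fun x => B (u x) (v₁ x)) s 0 (Fin.init m) (m (Fin.last s))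
    have p2 := fderiv_iFD (fun x => B (u x) (v₂ x)) s 0 (Fin.init m) (m (Fin.last s))
    have pv1 := fderiv_iFD v₁ s 0 (Fin.init m) (m (Fin.last s))
    have pv2 := fderiv_iFD v₂ s 0 (Fin.init m) (m (Fin.last s))
    rw [Fin.snoc_init_self] at p1 p2 pv1 pv2
    rw [← p1, ← p2, ← pv1, ← pv2]
    rw [fderiv_bilin_eq B hu hv₁, fderiv_bilin_eq B hu hv₂]
    have c11 : ContDiff ℝ s (fun x => ((compL ℝ E G H).comp B) (u x) (fderiv ℝ v₁ x)) :=
      (smooth_bilin _ hu (smooth_fderiv hv₁)).of_le (by exact_mod_cast le_top)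
    have c12 : ContDiff ℝ s (fun x => ((compL ℝ E F H).comp B.flip) (v₁ x) (fderiv ℝ u x)) :=
      (smooth_bilin _ hv₁ (smooth_fderiv hu)).of_le (by exact_mod_cast le_top)
    have c21 : ContDiff ℝ s (fun x => ((compL ℝ E G H).comp B) (u x) (fderiv ℝ v₂ x)) :=
      (smooth_bilin _ hu (smooth_fderiv hv₂)).of_le (by exact_mod_cast le_top)
    have c22 : ContDiff ℝ s (fun x => ((compL ℝ E F H).comp B.flip) (v₂ x) (fderiv ℝ u x)) :=
      (smooth_bilin _ hv₂ (smooth_fderiv hu)).of_le (by exact_mod_cast le_top)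
    rw [iteratedFDeriv_add_apply' c11.contDiffAt c12.contDiffAt, iteratedFDeriv_add_apply' c21.contDiffAt c22.contDiffAt]
    -- the second summands agree at order s
    have e2 : iteratedFDeriv ℝ s (fun x => ((compL ℝ E F H).comp B.flip) (v₁ x) (fderiv ℝ u x)) 0
        = iteratedFDeriv ℝ s (fun x => ((compL ℝ E F H).comp B.flip) (v₂ x) (fderiv ℝ u x)) 0 :=
      eqjet_bilin s ((compL ℝ E F H).comp B.flip) hv₁ hv₂ (smooth_fderiv hu) (smooth_fderiv hu)
        (fun k hk => h k (by omega)) (fun k _ => rfl) s le_rfl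
    -- the first summands: apply IH
    have hfd : ∀ k < s, iteratedFDeriv ℝ k (fderiv ℝ v₁) 0 = iteratedFDeriv ℝ k (fderiv ℝ v₂) 0 := by
      intro k hk
      ext μ w
      rw [fderiv_iFD, fderiv_iFD, h (k+1) (by omega)]
    have e1 := IH ((compL ℝ E G H).comp B) u (fderiv ℝ v₁) (fderiv ℝ v₂) hu
      (smooth_fderiv hv₁) (smooth_fderiv hv₂) hfd (Fin.init m)
    simp only [ContinuousMultilinearMap.add_apply, ContinuousLinearMap.add_apply, e2]
    have key : (iteratedFDeriv ℝ s (fun x => ((compL ℝ E G H).comp B) (u x) (fderiv ℝ v₁ x)) 0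
          (Fin.init m) - iteratedFDeriv ℝ s (fun x => ((compL ℝ E G H).comp B) (u x)
          (fderiv ℝ v₂ x)) 0 (Fin.init m)) (m (Fin.last s))
        = B (u 0) ((iteratedFDeriv ℝ s (fderiv ℝ v₁) 0 (Fin.init m)
            - iteratedFDeriv ℝ s (fderiv ℝ v₂) 0 (Fin.init m)) (m (Fin.last s))) := by
      rw [e1]; rfl
    rw [ContinuousLinearMap.sub_apply] at key
    rw [show ∀ a b c : H, a + b - (c + b) = a - c from fun a b c => by abel]
    rw [key, ContinuousLinearMap.sub_apply]

theorem fderiv_comp_eq {F G : Type u} [NormedAddCommGroup F] [NormedSpace ℝ F]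
    [NormedAddCommGroup G] [NormedSpace ℝ G] (f : F → G) {τ : E → F}
    (hf : ContDiff ℝ (⊤ : ℕ∞) f) (hτ : ContDiff ℝ (⊤ : ℕ∞) τ) :
    fderiv ℝ (fun x => f (τ x)) = fun x =>
      (compL ℝ E F G) (fderiv ℝ f (τ x)) (fderiv ℝ τ x) := by
  funext x
  have h := fderiv_comp (𝕜 := ℝ) x ((hf.differentiable (by simp)).differentiableAt)
    ((hτ.differentiable (by simp)).differentiableAt)
  simpa [Function.comp_def] using h

theorem eqjet_comp (s : ℕ) :
    ∀ {F G : Type u} [NormedAddCommGroup F] [NormedSpace ℝ F] [NormedAddCommGroup G]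
      [NormedSpace ℝ G] (f : F → G) {τ σ : E → F},
      ContDiff ℝ (⊤ : ℕ∞) f → ContDiff ℝ (⊤ : ℕ∞) τ → ContDiff ℝ (⊤ : ℕ∞) σ →
      (∀ k ≤ s, iteratedFDeriv ℝ k τ 0 = iteratedFDeriv ℝ k σ 0) →
      ∀ k ≤ s, iteratedFDeriv ℝ k (fun x => f (τ x)) 0
        = iteratedFDeriv ℝ k (fun x => f (σ x)) 0 := by
  induction s with
  | zero =>
    intro F G _ _ _ _ f τ σ hf hτ hσ h k hk
    obtain rfl : k = 0 := by omega
    ext m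
    simp only [iteratedFDeriv_zero_apply]
    rw [jet_val (h 0 le_rfl)]
  | succ s IH =>
    intro F G _ _ _ _ f τ σ hf hτ hσ h k hk
    match k, hk with
    | 0, _ =>
      ext m
      simp only [iteratedFDeriv_zero_apply]
      rw [jet_val (h 0 (by omega))]
    | (k+1), hk =>
      have hfd : ∀ k ≤ s, iteratedFDeriv ℝ k (fderiv ℝ (fun x => f (τ x))) 0
          = iteratedFDeriv ℝ k (fderiv ℝ (fun x => f (σ x))) 0 := by
        rw [fderiv_comp_eq f hf hτ, fderiv_comp_eq f hf hσ]
        exact eqjet_bilin s (compL ℝ E F G)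
          ((smooth_fderiv hf).comp hτ) ((smooth_fderiv hf).comp hσ)
          (smooth_fderiv hτ) (smooth_fderiv hσ)
          (IH (fderiv ℝ f) (smooth_fderiv hf) hτ hσ (fun k hk => h k (by omega)))
          (eqjet_fderiv h)
      ext m
      have h1 := fderiv_iFD (fun x => f (τ x)) k 0 (Fin.init m) (m (Fin.last k))
      have h2 := fderiv_iFD (fun x => f (σ x)) k 0 (Fin.init m) (m (Fin.last k))
      rw [Fin.snoc_init_self] at h1 h2
      rw [← h1, ← h2, hfd k (by omega)]

theorem key_two_peel {F : Type u} [NormedAddCommGroup F] [NormedSpace ℝ F]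
    (f : E → F) (n : ℕ) (x : E) (μ : Fin (n+2) → E) :
    iteratedFDeriv ℝ (n+2) f x μ
      = iteratedFDeriv ℝ n (fderiv ℝ (fderiv ℝ f)) x (Fin.init (Fin.init μ))
          (μ (Fin.castSucc (Fin.last n))) (μ (Fin.last (n+1))) := by
  rw [iteratedFDeriv_succ_apply_right]
  have h := iteratedFDeriv_succ_apply_right (𝕜 := ℝ) (f := fderiv ℝ f) (x := x)
    (n := n) (Fin.init μ)
  have h2 := congrArg (fun T : E →L[ℝ] F => T (μ (Fin.last (n+1)))) h
  rw [h2]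
  rfl

theorem iFD_apply_two {F : Type u} [NormedAddCommGroup F] [NormedSpace ℝ F]
    {f : E → F} (hf : ContDiff ℝ (⊤ : ℕ∞) f) (n : ℕ) (x : E) (v w : E) (ν : Fin n → E) :
    iteratedFDeriv ℝ n (fderiv ℝ (fderiv ℝ f)) x ν v w
      = iteratedFDeriv ℝ n (fun y => fderiv ℝ (fderiv ℝ f) y v w) x ν := by
  have hD2 : ContDiff ℝ (⊤ : ℕ∞) (fderiv ℝ (fderiv ℝ f)) := smooth_fderiv (smooth_fderiv hf)
  have hc := ContinuousLinearMap.iteratedFDeriv_comp_left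
    (f := fderiv ℝ (fderiv ℝ f))
    (((ContinuousLinearMap.apply ℝ F w).comp
        (ContinuousLinearMap.apply ℝ (E →L[ℝ] F) v))) (hD2.contDiffAt (x := x)) (i := n) (by exact_mod_cast le_top)
  have h2 := congrFun (congrArg DFunLike.coe hc) ν
  simp only [ContinuousLinearMap.compContinuousMultilinearMap_coe, Function.comp_apply] at h2
  calc iteratedFDeriv ℝ n (fderiv ℝ (fderiv ℝ f)) x ν v w
      = ((ContinuousLinearMap.apply ℝ F w).comp (ContinuousLinearMap.apply ℝ (E →L[ℝ] F) v))
          (iteratedFDeriv ℝ n (fderiv ℝ (fderiv ℝ f)) x ν) := rfl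
    _ = iteratedFDeriv ℝ n (⇑((ContinuousLinearMap.apply ℝ F w).comp
          (ContinuousLinearMap.apply ℝ (E →L[ℝ] F) v)) ∘ fderiv ℝ (fderiv ℝ f)) x ν := h2.symm
    _ = iteratedFDeriv ℝ n (fun y => fderiv ℝ (fderiv ℝ f) y v w) x ν := rfl

theorem iFD_last_two_swap {F : Type u} [NormedAddCommGroup F] [NormedSpace ℝ F]
    {f : E → F} (hf : ContDiff ℝ (⊤ : ℕ∞) f) (n : ℕ) (x : E) (m : Fin (n+2) → E) :
    iteratedFDeriv ℝ (n+2) f x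
        (m ∘ (Equiv.swap (Fin.castSucc (Fin.last n)) (Fin.last (n+1))))
      = iteratedFDeriv ℝ (n+2) f x m := by
  rw [key_two_peel, key_two_peel]
  have hinit : Fin.init (Fin.init (m ∘ (Equiv.swap (Fin.castSucc (Fin.last n))
      (Fin.last (n+1))))) = Fin.init (Fin.init m) := by
    funext i
    simp only [Fin.init, Function.comp_apply]
    congr 1
    apply Equiv.swap_apply_of_ne_of_ne
    · simp only [ne_eq, Fin.castSucc_inj]
      exact (Fin.castSucc_lt_last i).ne
    · exact (Fin.castSucc_lt_last _).ne
  rw [hinit]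
  rw [show (m ∘ (Equiv.swap (Fin.castSucc (Fin.last n)) (Fin.last (n+1))))
      (Fin.castSucc (Fin.last n)) = m (Fin.last (n+1)) by simp,
    show (m ∘ (Equiv.swap (Fin.castSucc (Fin.last n)) (Fin.last (n+1))))
      (Fin.last (n+1)) = m (Fin.castSucc (Fin.last n)) by simp]
  rw [iFD_apply_two hf, iFD_apply_two hf]
  have he : (fun y => fderiv ℝ (fderiv ℝ f) y (m (Fin.last (n+1))) (m (Fin.castSucc (Fin.last n))))
      = (fun y => fderiv ℝ (fderiv ℝ f) y (m (Fin.castSucc (Fin.last n))) (m (Fin.last (n+1)))) := by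
    funext y
    exact (hf.contDiffAt.isSymmSndFDerivAt (by rw [minSmoothness_of_isRCLikeNormedField]; exact WithTop.coe_le_coe.mpr le_top)).eq _ _
  rw [he]

theorem iFD_swap_last : ∀ (n : ℕ) {F : Type u} [NormedAddCommGroup F] [NormedSpace ℝ F]
    {f : E → F}, ContDiff ℝ (⊤ : ℕ∞) f → ∀ (x : E) (m : Fin (n+1) → E) (k : Fin (n+1)),
    iteratedFDeriv ℝ (n+1) f x (m ∘ (Equiv.swap k (Fin.last n)))
      = iteratedFDeriv ℝ (n+1) f x m := by
  intro n
  induction n with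
  | zero =>
    intro F _ _ f hf x m k
    have : k = Fin.last 0 := Fin.ext (by omega)
    subst this
    simp
  | succ n IH =>
    intro F _ _ f hf x m k
    by_cases hk1 : k = Fin.last (n+1)
    · subst hk1; simp
    by_cases hk2 : k = Fin.castSucc (Fin.last n)
    · subst hk2; exact iFD_last_two_swap hf n x m
    -- now k.val < n
    have hkv : (k : ℕ) < n := by
      have h1 : (k : ℕ) ≠ n + 1 := fun h => hk1 (Fin.ext h)
      have h2 : (k : ℕ) ≠ n := fun h => hk2 (Fin.ext (by simp [h]))
      omega
    have hkq : k ≠ Fin.castSucc (Fin.last n) := hk2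
    have hkp : k ≠ Fin.last (n+1) := hk1
    have hqp : (Fin.castSucc (Fin.last n) : Fin (n+2)) ≠ Fin.last (n+1) :=
      (Fin.castSucc_lt_last _).ne
    -- permutation identity: swap k p = swap q p ∘ swap k q ∘ swap q p
    have hperm : (m ∘ (Equiv.swap k (Fin.last (n+1))))
        = (((m ∘ (Equiv.swap (Fin.castSucc (Fin.last n)) (Fin.last (n+1))))
            ∘ (Equiv.swap k (Fin.castSucc (Fin.last n))))
            ∘ (Equiv.swap (Fin.castSucc (Fin.last n)) (Fin.last (n+1)))) := by
      funext i
      simp only [Function.comp_apply]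
      congr 1
      rcases eq_or_ne i k with rfl | hik
      · rw [Equiv.swap_apply_left, Equiv.swap_apply_of_ne_of_ne hkq hkp,
          Equiv.swap_apply_left, Equiv.swap_apply_left]
      rcases eq_or_ne i (Fin.castSucc (Fin.last n)) with rfl | hiq
      · rw [Equiv.swap_apply_of_ne_of_ne (Ne.symm hkq) hqp, Equiv.swap_apply_left,
          Equiv.swap_apply_of_ne_of_ne (Ne.symm hkp) (Ne.symm hqp), Equiv.swap_apply_right]
      rcases eq_or_ne i (Fin.last (n+1)) with rfl | hip
      · rw [Equiv.swap_apply_right, Equiv.swap_apply_right, Equiv.swap_apply_right,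
          Equiv.swap_apply_of_ne_of_ne hkq hkp]
      · rw [Equiv.swap_apply_of_ne_of_ne hik hip, Equiv.swap_apply_of_ne_of_ne hiq hip,
          Equiv.swap_apply_of_ne_of_ne hik hiq, Equiv.swap_apply_of_ne_of_ne hiq hip]
    rw [hperm]
    rw [iFD_last_two_swap hf n x
      ((m ∘ (Equiv.swap (Fin.castSucc (Fin.last n)) (Fin.last (n+1))))
        ∘ (Equiv.swap k (Fin.castSucc (Fin.last n))))]
    -- middle step: swap not involving the last slot; peel right and use IH
    have hmid : ∀ (μ : Fin (n+2) → E) (k' : Fin (n+1)), k' ≠ Fin.last n →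
        iteratedFDeriv ℝ (n+2) f x (μ ∘ (Equiv.swap (Fin.castSucc k')
          (Fin.castSucc (Fin.last n)))) = iteratedFDeriv ℝ (n+2) f x μ := by
      intro μ k' _
      rw [iteratedFDeriv_succ_apply_right]
      conv_rhs => rw [iteratedFDeriv_succ_apply_right]
      have hlast : (μ ∘ (Equiv.swap (Fin.castSucc k') (Fin.castSucc (Fin.last n))))
          (Fin.last (n+1)) = μ (Fin.last (n+1)) := by
        simp only [Function.comp_apply]
        rw [Equiv.swap_apply_of_ne_of_ne ((Fin.castSucc_lt_last _).ne')
          ((Fin.castSucc_lt_last _).ne')]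
      have hinit : Fin.init (μ ∘ (Equiv.swap (Fin.castSucc k') (Fin.castSucc (Fin.last n))))
          = (Fin.init μ) ∘ (Equiv.swap k' (Fin.last n)) := by
        funext i
        simp only [Fin.init, Function.comp_apply]
        congr 1
        rcases eq_or_ne i k' with rfl | hik
        · rw [Equiv.swap_apply_left, Equiv.swap_apply_left]
        rcases eq_or_ne i (Fin.last n) with rfl | hil
        · rw [Equiv.swap_apply_right, Equiv.swap_apply_right]
        · rw [Equiv.swap_apply_of_ne_of_ne hik hil,
            Equiv.swap_apply_of_ne_of_ne (fun h => hik (Fin.castSucc_injective _ h))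
              (fun h => hil (Fin.castSucc_injective _ h))]
      rw [hlast, hinit]
      rw [IH (smooth_fderiv hf) x (Fin.init μ) k']
    have hk' : k = Fin.castSucc (⟨(k : ℕ), by omega⟩ : Fin (n+1)) := Fin.ext (by simp)
    rw [hk', hmid _ _ (fun h => by
      have := congrArg Fin.val h
      simp at this; omega)]
    exact iFD_last_two_swap hf n x m


end AuxJets


noncomputable def Phi (n : ℕ) (a i : Fin n) :
    ((Fin n → ℝ) →L[ℝ] (Fin n → ℝ)) →L[ℝ] ℝ :=
  (ContinuousLinearMap.proj a).comp (ContinuousLinearMap.apply ℝ (Fin n → ℝ) (Pi.single i 1))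

theorem p_eq_fun {n : ℕ} (γ : (Fin n → ℝ) → (Fin n → ℝ)) (hγ : ContDiff ℝ (⊤ : ℕ∞) γ) (a i : Fin n) :
    (fun x => fderiv ℝ (fun y => γ y a) x (Pi.single i 1))
      = fun x => Phi n a i (fderiv ℝ γ x) := by
  funext x
  have h0 : (fun y => γ y a)
      = ⇑(ContinuousLinearMap.proj (R := ℝ) (φ := fun _ : Fin n => ℝ) a) ∘ γ := rfl
  rw [h0]
  have hd := ((ContinuousLinearMap.proj (R := ℝ) (φ := fun _ : Fin n => ℝ) a).hasFDerivAt
    (x := γ x)).comp x ((hγ.differentiable (by simp) x).hasFDerivAt)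
  rw [hd.fderiv]
  rfl

theorem p_jet {n : ℕ} (γ : (Fin n → ℝ) → (Fin n → ℝ)) (hγ : ContDiff ℝ (⊤ : ℕ∞) γ) (a i : Fin n)
    (k : ℕ) (m : Fin k → (Fin n → ℝ)) :
    iteratedFDeriv ℝ k (fun x => Phi n a i (fderiv ℝ γ x)) 0 m
      = iteratedFDeriv ℝ (k+1) γ 0 (Fin.snoc m (Pi.single i 1)) a := by
  have hc := ContinuousLinearMap.iteratedFDeriv_comp_left (f := fderiv ℝ γ)
    (Phi n a i) ((smooth_fderiv hγ).contDiffAt (x := (0 : Fin n → ℝ))) (i := k) (by exact_mod_cast le_top)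
  have h2 := congrFun (congrArg DFunLike.coe hc) m
  simp only [ContinuousLinearMap.compContinuousMultilinearMap_coe, Function.comp_apply] at h2
  calc iteratedFDeriv ℝ k (fun x => Phi n a i (fderiv ℝ γ x)) 0 m
      = Phi n a i (iteratedFDeriv ℝ k (fderiv ℝ γ) 0 m) := h2
    _ = (iteratedFDeriv ℝ k (fderiv ℝ γ) 0 m (Pi.single i 1)) a := rfl
    _ = iteratedFDeriv ℝ (k+1) γ 0 (Fin.snoc m (Pi.single i 1)) a := by rw [fderiv_iFD]


theorem p_eq_Phi {n : ℕ} (γ : (Fin n → ℝ) → (Fin n → ℝ)) (hγ : ContDiff ℝ (⊤ : ℕ∞) γ) (a i : Fin n)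
    (x : Fin n → ℝ) :
    fderiv ℝ (fun y => γ y a) x (Pi.single i 1) = Phi n a i (fderiv ℝ γ x) :=
  congrFun (p_eq_fun γ hγ a i) x

theorem p_eq_pt {n : ℕ} (γ : (Fin n → ℝ) → (Fin n → ℝ)) (hγ : ContDiff ℝ (⊤ : ℕ∞) γ) (a i : Fin n)
    (x : Fin n → ℝ) :
    fderiv ℝ (fun y => γ y a) x (Pi.single i 1)
      = (fderiv ℝ γ x (Pi.single i 1)) a :=
  (p_eq_Phi γ hγ a i x).trans rfl

theorem summand_diff {n : ℕ} (g0 : (Fin n → ℝ) → ℝ) (hg0 : ContDiff ℝ (⊤ : ℕ∞) g0)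
    (τ σ : (Fin n → ℝ) → (Fin n → ℝ)) (hτ : ContDiff ℝ (⊤ : ℕ∞) τ) (hσ : ContDiff ℝ (⊤ : ℕ∞) σ)
    (s : ℕ) (jets : ∀ k ≤ s, iteratedFDeriv ℝ k τ 0 = iteratedFDeriv ℝ k σ 0)
    (a b i j : Fin n) (m : Fin s → (Fin n → ℝ)) :
    iteratedFDeriv ℝ s (fun x => g0 (τ x) * fderiv ℝ (fun y => τ y a) x (Pi.single i 1)
        * fderiv ℝ (fun y => τ y b) x (Pi.single j 1)) 0 m
      - iteratedFDeriv ℝ s (fun x => g0 (σ x) * fderiv ℝ (fun y => σ y a) x (Pi.single i 1)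
        * fderiv ℝ (fun y => σ y b) x (Pi.single j 1)) 0 m
      = g0 (σ 0) * ((iteratedFDeriv ℝ (s+1) τ 0 (Fin.snoc m (Pi.single i 1)) a
            - iteratedFDeriv ℝ (s+1) σ 0 (Fin.snoc m (Pi.single i 1)) a)
          * (fderiv ℝ τ 0 (Pi.single j 1) b))
        + g0 (σ 0) * ((fderiv ℝ σ 0 (Pi.single i 1) a)
          * (iteratedFDeriv ℝ (s+1) τ 0 (Fin.snoc m (Pi.single j 1)) b
            - iteratedFDeriv ℝ (s+1) σ 0 (Fin.snoc m (Pi.single j 1)) b)) := by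
  classical
  simp only [p_eq_Phi τ hτ a i, p_eq_Phi τ hτ b j, p_eq_Phi σ hσ a i, p_eq_Phi σ hσ b j]
  set fτ : (Fin n → ℝ) → ℝ := fun x => g0 (τ x) with hfτdef
  set fσ : (Fin n → ℝ) → ℝ := fun x => g0 (σ x) with hfσdef
  set Pτ : (Fin n → ℝ) → ℝ := fun x => Phi n a i (fderiv ℝ τ x) with hPτdef
  set Pσ : (Fin n → ℝ) → ℝ := fun x => Phi n a i (fderiv ℝ σ x) with hPσdef
  set Qτ : (Fin n → ℝ) → ℝ := fun x => Phi n b j (fderiv ℝ τ x) with hQτdef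
  set Qσ : (Fin n → ℝ) → ℝ := fun x => Phi n b j (fderiv ℝ σ x) with hQσdef
  have hsfτ : ContDiff ℝ (⊤ : ℕ∞) fτ := hg0.comp hτ
  have hsfσ : ContDiff ℝ (⊤ : ℕ∞) fσ := hg0.comp hσ
  have hsPτ : ContDiff ℝ (⊤ : ℕ∞) Pτ := (Phi n a i).contDiff.comp (smooth_fderiv hτ)
  have hsPσ : ContDiff ℝ (⊤ : ℕ∞) Pσ := (Phi n a i).contDiff.comp (smooth_fderiv hσ)
  have hsQτ : ContDiff ℝ (⊤ : ℕ∞) Qτ := (Phi n b j).contDiff.comp (smooth_fderiv hτ)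
  have hsQσ : ContDiff ℝ (⊤ : ℕ∞) Qσ := (Phi n b j).contDiff.comp (smooth_fderiv hσ)
  have hjf : ∀ k ≤ s, iteratedFDeriv ℝ k fτ 0 = iteratedFDeriv ℝ k fσ 0 :=
    eqjet_comp s g0 hg0 hτ hσ jets
  have hjP : ∀ k < s, iteratedFDeriv ℝ k Pτ 0 = iteratedFDeriv ℝ k Pσ 0 := by
    intro k hk
    ext μ
    rw [hPτdef, hPσdef, p_jet τ hτ a i, p_jet σ hσ a i, jets (k+1) (by omega)]
  have hjQ : ∀ k < s, iteratedFDeriv ℝ k Qτ 0 = iteratedFDeriv ℝ k Qσ 0 := by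
    intro k hk
    ext μ
    rw [hQτdef, hQσdef, p_jet τ hτ b j, p_jet σ hσ b j, jets (k+1) (by omega)]
  set mulL : ℝ →L[ℝ] ℝ →L[ℝ] ℝ := ContinuousLinearMap.mul ℝ ℝ with hmulL
  -- jets of the products f*P agree below s
  have hjfP : ∀ k < s, iteratedFDeriv ℝ k (fun x => mulL (fτ x) (Pτ x)) 0
      = iteratedFDeriv ℝ k (fun x => mulL (fσ x) (Pσ x)) 0 := by
    intro k hk
    exact eqjet_bilin k mulL hsfτ hsfσ hsPτ hsPσ (fun k' hk' => hjf k' (by omega))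
      (fun k' hk' => hjP k' (by omega)) k le_rfl
  -- bracket 1 : difference with Qτ fixed
  have hb1 := leading s mulL Qτ (fun x => mulL (fτ x) (Pτ x)) (fun x => mulL (fσ x) (Pσ x))
    hsQτ ((ContinuousLinearMap.mul ℝ ℝ).contDiff.comp hsfτ |>.clm_apply hsPτ)
    ((ContinuousLinearMap.mul ℝ ℝ).contDiff.comp hsfσ |>.clm_apply hsPσ) hjfP m
  -- inner difference (fτ Pτ vs fσ Pσ)
  have hz : iteratedFDeriv ℝ s (fun x => mulL (fτ x) (Pτ x)) 0
      = iteratedFDeriv ℝ s (fun x => mulL (fσ x) (Pτ x)) 0 :=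
    eqjet_bilin s mulL hsfτ hsfσ hsPτ hsPτ hjf (fun _ _ => rfl) s le_rfl
  have hb2 := leading s mulL fσ Pτ Pσ hsfσ hsPτ hsPσ hjP m
  -- bracket 2 : difference with fσ * Pσ fixed
  have hb3 := leading s mulL (fun x => mulL (fσ x) (Pσ x)) Qτ Qσ
    ((ContinuousLinearMap.mul ℝ ℝ).contDiff.comp hsfσ |>.clm_apply hsPσ) hsQτ hsQσ hjQ m
  -- identify the three functions appearing in the goal
  have e1 : (fun x => fτ x * Pτ x * Qτ x) = (fun x => mulL (Qτ x) (mulL (fτ x) (Pτ x))) := by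
    funext x; simp [hmulL, ContinuousLinearMap.mul_apply']; ring
  have e2 : (fun x => fσ x * Pσ x * Qσ x)
      = (fun x => mulL (mulL (fσ x) (Pσ x)) (Qσ x)) := by
    funext x; simp [hmulL, ContinuousLinearMap.mul_apply']
  have e3 : (fun x => mulL (Qτ x) (mulL (fσ x) (Pσ x)))
      = (fun x => mulL (mulL (fσ x) (Pσ x)) (Qτ x)) := by
    funext x; simp [hmulL, ContinuousLinearMap.mul_apply']; ring
  rw [e1, e2]
  have split : iteratedFDeriv ℝ s (fun x => mulL (Qτ x) (mulL (fτ x) (Pτ x))) 0 m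
      - iteratedFDeriv ℝ s (fun x => mulL (mulL (fσ x) (Pσ x)) (Qσ x)) 0 m
      = (iteratedFDeriv ℝ s (fun x => mulL (Qτ x) (mulL (fτ x) (Pτ x))) 0 m
          - iteratedFDeriv ℝ s (fun x => mulL (Qτ x) (mulL (fσ x) (Pσ x))) 0 m)
        + (iteratedFDeriv ℝ s (fun x => mulL (mulL (fσ x) (Pσ x)) (Qτ x)) 0 m
          - iteratedFDeriv ℝ s (fun x => mulL (mulL (fσ x) (Pσ x)) (Qσ x)) 0 m) := by
    rw [show (fun x => mulL (Qτ x) (mulL (fσ x) (Pσ x)))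
      = (fun x => mulL (mulL (fσ x) (Pσ x)) (Qτ x)) from e3]
    ring
  rw [split, hb1, hb3]
  -- rewrite inner difference
  have hinner : iteratedFDeriv ℝ s (fun x => mulL (fτ x) (Pτ x)) 0 m
      - iteratedFDeriv ℝ s (fun x => mulL (fσ x) (Pσ x)) 0 m
      = fσ 0 * (iteratedFDeriv ℝ s Pτ 0 m - iteratedFDeriv ℝ s Pσ 0 m) := by
    rw [hz]
    have := hb2
    simpa [hmulL, ContinuousLinearMap.mul_apply'] using this
  rw [hinner]
  -- now pure value computation
  have vPτ : iteratedFDeriv ℝ s Pτ 0 m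
      = iteratedFDeriv ℝ (s+1) τ 0 (Fin.snoc m (Pi.single i 1)) a := p_jet τ hτ a i s m
  have vPσ : iteratedFDeriv ℝ s Pσ 0 m
      = iteratedFDeriv ℝ (s+1) σ 0 (Fin.snoc m (Pi.single i 1)) a := p_jet σ hσ a i s m
  have vQτ : iteratedFDeriv ℝ s Qτ 0 m
      = iteratedFDeriv ℝ (s+1) τ 0 (Fin.snoc m (Pi.single j 1)) b := p_jet τ hτ b j s m
  have vQσ : iteratedFDeriv ℝ s Qσ 0 m
      = iteratedFDeriv ℝ (s+1) σ 0 (Fin.snoc m (Pi.single j 1)) b := p_jet σ hσ b j s m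
  have vQτ0 : Qτ 0 = fderiv ℝ τ 0 (Pi.single j 1) b := rfl
  have vPσ0 : Pσ 0 = fderiv ℝ σ 0 (Pi.single i 1) a := rfl
  simp only [hmulL, ContinuousLinearMap.mul_apply'] at *
  rw [vPτ, vPσ, vQτ, vQσ, vQτ0, vPσ0]
  ring

theorem metric_rel {n r : ℕ} (g : Fin n → Fin n → (Fin n → ℝ) → ℝ)
    (hg : ∀ i j, ContDiff ℝ (⊤ : ℕ∞) (g i j))
    (τ σ : (Fin n → ℝ) → (Fin n → ℝ))
    (hτ : ContDiff ℝ (⊤ : ℕ∞) τ) (hσ : ContDiff ℝ (⊤ : ℕ∞) σ) (hσ0 : σ 0 = 0)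
    (hτg : ∀ s ≤ r, ∀ i j, iteratedFDeriv ℝ s (pullbackMetric n g τ i j) 0 =
      iteratedFDeriv ℝ s (g i j) 0)
    (hσg : ∀ s ≤ r, ∀ i j, iteratedFDeriv ℝ s (pullbackMetric n g σ i j) 0 =
      iteratedFDeriv ℝ s (g i j) 0)
    (s : ℕ) (hs : s ≤ r)
    (jets : ∀ k ≤ s, iteratedFDeriv ℝ k τ 0 = iteratedFDeriv ℝ k σ 0)
    (i j : Fin n) (m : Fin s → (Fin n → ℝ)) :
    ∑ a : Fin n, ∑ b : Fin n,
      (g a b 0 * ((iteratedFDeriv ℝ (s+1) τ 0 (Fin.snoc m (Pi.single i 1)) a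
            - iteratedFDeriv ℝ (s+1) σ 0 (Fin.snoc m (Pi.single i 1)) a)
          * (fderiv ℝ τ 0 (Pi.single j 1) b))
        + g a b 0 * ((fderiv ℝ σ 0 (Pi.single i 1) a)
          * (iteratedFDeriv ℝ (s+1) τ 0 (Fin.snoc m (Pi.single j 1)) b
            - iteratedFDeriv ℝ (s+1) σ 0 (Fin.snoc m (Pi.single j 1)) b))) = 0 := by
  classical
  have hsmooth : ∀ (γ : (Fin n → ℝ) → (Fin n → ℝ)), ContDiff ℝ (⊤ : ℕ∞) γ → ∀ (a b : Fin n),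
      ContDiff ℝ ((s : ℕ∞) : WithTop ℕ∞) (fun x => g a b (γ x)
        * fderiv ℝ (fun y => γ y a) x (Pi.single i 1)
        * fderiv ℝ (fun y => γ y b) x (Pi.single j 1)) := by
    intro γ hγ a b
    have h1 : ContDiff ℝ (⊤ : ℕ∞) (fun x => g a b (γ x)
        * fderiv ℝ (fun y => γ y a) x (Pi.single i 1)
        * fderiv ℝ (fun y => γ y b) x (Pi.single j 1)) := by
      simp only [p_eq_Phi γ hγ]
      exact (((hg a b).comp hγ).mul
        ((Phi n a i).contDiff.comp (smooth_fderiv hγ))).mul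
        ((Phi n b j).contDiff.comp (smooth_fderiv hγ))
    exact h1.of_le (by exact_mod_cast le_top)
  have hsplit : ∀ (γ : (Fin n → ℝ) → (Fin n → ℝ)), ContDiff ℝ (⊤ : ℕ∞) γ →
      iteratedFDeriv ℝ s (pullbackMetric n g γ i j) 0 m
        = ∑ a : Fin n, ∑ b : Fin n, iteratedFDeriv ℝ s (fun x => g a b (γ x)
            * fderiv ℝ (fun y => γ y a) x (Pi.single i 1)
            * fderiv ℝ (fun y => γ y b) x (Pi.single j 1)) 0 m := by
    intro γ hγ
    have h0 : pullbackMetric n g γ i j = (∑ a : Fin n, (fun x => ∑ b : Fin n, g a b (γ x)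
        * fderiv ℝ (fun y => γ y a) x (Pi.single i 1)
        * fderiv ℝ (fun y => γ y b) x (Pi.single j 1)) ·) := by
      funext x
      simp [pullbackMetric]
    rw [h0, iteratedFDeriv_sum (fun a _ => by
      exact ContDiff.sum (fun b _ => hsmooth γ hγ a b))]
    simp only [ContinuousMultilinearMap.sum_apply, Finset.sum_apply]
    refine Finset.sum_congr rfl (fun a _ => ?_)
    have h1 : (fun x => ∑ b : Fin n, g a b (γ x)
        * fderiv ℝ (fun y => γ y a) x (Pi.single i 1)
        * fderiv ℝ (fun y => γ y b) x (Pi.single j 1))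
        = (∑ b : Fin n, (fun x => g a b (γ x)
        * fderiv ℝ (fun y => γ y a) x (Pi.single i 1)
        * fderiv ℝ (fun y => γ y b) x (Pi.single j 1)) ·) := by
      funext x; simp
    rw [h1, iteratedFDeriv_sum (fun b _ => hsmooth γ hγ a b)]
    simp only [ContinuousMultilinearMap.sum_apply, Finset.sum_apply]
  have hPP : iteratedFDeriv ℝ s (pullbackMetric n g τ i j) 0 m
      = iteratedFDeriv ℝ s (pullbackMetric n g σ i j) 0 m := by
    rw [hτg s hs i j, hσg s hs i j]
  rw [hsplit τ hτ, hsplit σ hσ] at hPP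
  have hdiff : ∑ a : Fin n, ∑ b : Fin n,
      (iteratedFDeriv ℝ s (fun x => g a b (τ x)
          * fderiv ℝ (fun y => τ y a) x (Pi.single i 1)
          * fderiv ℝ (fun y => τ y b) x (Pi.single j 1)) 0 m
        - iteratedFDeriv ℝ s (fun x => g a b (σ x)
          * fderiv ℝ (fun y => σ y a) x (Pi.single i 1)
          * fderiv ℝ (fun y => σ y b) x (Pi.single j 1)) 0 m) = 0 := by
    simp only [Finset.sum_sub_distrib]
    rw [hPP]; ring
  rw [← hdiff]
  refine Finset.sum_congr rfl (fun a _ => Finset.sum_congr rfl (fun b _ => ?_))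
  rw [summand_diff (g a b) (hg a b) τ σ hτ hσ s jets a b i j m, hσ0]

-- representation of a vector in the standard basis
theorem pi_repr {n : ℕ} (u : Fin n → ℝ) :
    u = ∑ t : Fin n, u t • (Pi.single t 1 : Fin n → ℝ) := by
  funext b
  rw [Finset.sum_apply]
  simp [Pi.single_apply]

-- linearity of the double sum in the second slot
theorem G0_lin {n : ℕ} (G : Fin n → Fin n → ℝ) (x : Fin n → ℝ) (c : Fin n → ℝ)
    (w : Fin n → Fin n → ℝ) :
    ∑ a : Fin n, ∑ b : Fin n, G a b * x a * (∑ t : Fin n, c t • w t) b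
      = ∑ t : Fin n, c t * ∑ a : Fin n, ∑ b : Fin n, G a b * x a * w t b := by
  have h1 : ∀ a b : Fin n, G a b * x a * (∑ t : Fin n, c t • w t) b
      = ∑ t : Fin n, c t * (G a b * x a * w t b) := by
    intro a b
    rw [Finset.sum_apply, Finset.mul_sum]
    refine Finset.sum_congr rfl (fun t _ => ?_)
    simp [mul_comm, mul_assoc, mul_left_comm]
  simp only [h1]
  calc ∑ a : Fin n, ∑ b : Fin n, ∑ t : Fin n, c t * (G a b * x a * w t b)
      = ∑ a : Fin n, ∑ t : Fin n, ∑ b : Fin n, c t * (G a b * x a * w t b) :=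
        Finset.sum_congr rfl (fun a _ => Finset.sum_comm)
    _ = ∑ t : Fin n, ∑ a : Fin n, ∑ b : Fin n, c t * (G a b * x a * w t b) :=
        Finset.sum_comm
    _ = ∑ t : Fin n, c t * ∑ a : Fin n, ∑ b : Fin n, G a b * x a * w t b := by
        simp only [← Finset.mul_sum]

/-- The map `Aut(j^r_{x₀} g) → O(T_{x₀}X, g_{x₀})`, sending the `(r+1)`-jet of an
automorphism to its tangent map, is injective: if two germs of diffeomorphisms
fixing `x₀ = 0` (here represented by smooth maps `τ`, `σ` in a chart) both
preserve the `r`-jet of a Riemannian metric `g` at `0` and have the same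
differential at `0`, then they have the same `(r+1)`-jet at `0`. -/
theorem stmt17 (n r : ℕ)
    (g : Fin n → Fin n → (Fin n → ℝ) → ℝ)
    (hg : ∀ i j, ContDiff ℝ (⊤ : ℕ∞) (g i j))
    (hgsym : ∀ i j x, g i j x = g j i x)
    (hgpos : ∀ (x v : Fin n → ℝ), v ≠ 0 →
      0 < ∑ i : Fin n, ∑ j : Fin n, g i j x * v i * v j)
    (τ σ : (Fin n → ℝ) → (Fin n → ℝ))
    (hτ : ContDiff ℝ (⊤ : ℕ∞) τ) (hσ : ContDiff ℝ (⊤ : ℕ∞) σ)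
    (hτ0 : τ 0 = 0) (hσ0 : σ 0 = 0)
    -- `τ` and `σ` preserve the `r`-jet of `g` at `0`:
    (hτg : ∀ s ≤ r, ∀ i j, iteratedFDeriv ℝ s (pullbackMetric n g τ i j) 0 =
      iteratedFDeriv ℝ s (g i j) 0)
    (hσg : ∀ s ≤ r, ∀ i j, iteratedFDeriv ℝ s (pullbackMetric n g σ i j) 0 =
      iteratedFDeriv ℝ s (g i j) 0)
    -- `τ` and `σ` have the same differential at `0`:
    (hd : fderiv ℝ τ 0 = fderiv ℝ σ 0) :
    -- then `τ` and `σ` have the same `(r+1)`-jet at `0`: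
    ∀ s ≤ r + 1, iteratedFDeriv ℝ s τ 0 = iteratedFDeriv ℝ s σ 0 := by
  classical
  intro s hs
  induction s using Nat.strong_induction_on with
  | _ s IH =>
  match s, hs with
  | 0, _ =>
    ext m
    simp only [iteratedFDeriv_zero_apply]
    rw [hτ0, hσ0]
  | 1, _ =>
    ext m
    simp only [iteratedFDeriv_one_apply]
    rw [hd]
  | (w+2), hs =>
    have hwr : w + 1 ≤ r := by omega
    have jets : ∀ k ≤ w + 1, iteratedFDeriv ℝ k τ 0 = iteratedFDeriv ℝ k σ 0 :=
      fun k hk => IH k (by omega) (by omega)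
    set e : Fin n → (Fin n → ℝ) := fun k => Pi.single k 1 with he
    set L : (Fin n → ℝ) →L[ℝ] (Fin n → ℝ) := fderiv ℝ τ 0 with hL
    set D : ContinuousMultilinearMap ℝ (fun _ : Fin (w+2) => (Fin n → ℝ)) (Fin n → ℝ) :=
      iteratedFDeriv ℝ (w+2) τ 0 - iteratedFDeriv ℝ (w+2) σ 0 with hD
    have hDapp : ∀ (μ : Fin (w+2) → (Fin n → ℝ)) (a : Fin n),
        D μ a = iteratedFDeriv ℝ (w+2) τ 0 μ a - iteratedFDeriv ℝ (w+2) σ 0 μ a := by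
      intro μ a
      rw [hD, ContinuousMultilinearMap.sub_apply, Pi.sub_apply]
    set G0 : (Fin n → ℝ) → (Fin n → ℝ) → ℝ :=
      fun v w' => ∑ a : Fin n, ∑ b : Fin n, g a b 0 * v a * w' b with hG0
    -- symmetry of G0
    have hG0symm : ∀ v w', G0 v w' = G0 w' v := by
      intro v w'
      rw [hG0]
      simp only
      rw [Finset.sum_comm]
      exact Finset.sum_congr rfl (fun b _ => Finset.sum_congr rfl (fun a _ => by
        rw [hgsym]; ring)
      )
    -- the basic relation coming from preservation of the metric jets
    have REL : ∀ (i j : Fin n) (m : Fin (w+1) → (Fin n → ℝ)),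
        G0 (D (Fin.snoc m (e i))) (L (e j)) + G0 (L (e i)) (D (Fin.snoc m (e j))) = 0 := by
      intro i j m
      have h00 := metric_rel (r := r) g hg τ σ hτ hσ hσ0 hτg hσg (w+1) hwr jets i j m
      have h0 : ∑ a : Fin n, ∑ b : Fin n,
          (g a b 0 * ((iteratedFDeriv ℝ (w+2) τ 0 (Fin.snoc m (Pi.single i 1)) a
                - iteratedFDeriv ℝ (w+2) σ 0 (Fin.snoc m (Pi.single i 1)) a)
              * (fderiv ℝ τ 0 (Pi.single j 1) b))
            + g a b 0 * ((fderiv ℝ σ 0 (Pi.single i 1) a)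
              * (iteratedFDeriv ℝ (w+2) τ 0 (Fin.snoc m (Pi.single j 1)) b
                - iteratedFDeriv ℝ (w+2) σ 0 (Fin.snoc m (Pi.single j 1)) b))) = 0 := h00
      rw [← hd, ← hL] at h0
      rw [← h0, hG0]
      simp only
      rw [← Finset.sum_add_distrib]
      refine Finset.sum_congr rfl (fun a _ => ?_)
      rw [← Finset.sum_add_distrib]
      refine Finset.sum_congr rfl (fun b _ => ?_)
      simp only [he]
      rw [hDapp, hDapp]
      ring
    -- symmetry of D in the first and last slots
    have SYM : ∀ (u v : Fin n → ℝ) (m'' : Fin w → (Fin n → ℝ)),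
        D (Fin.cons u (Fin.snoc m'' v)) = D (Fin.cons v (Fin.snoc m'' u)) := by
      intro u v m''
      have htuple : (Fin.cons u (Fin.snoc m'' v) : Fin (w+2) → (Fin n → ℝ))
          ∘ (Equiv.swap (0 : Fin (w+2)) (Fin.last (w+1)))
          = Fin.cons v (Fin.snoc m'' u) := by
        funext t
        simp only [Function.comp_apply]
        rcases eq_or_ne t 0 with rfl | ht0
        · rw [Equiv.swap_apply_left]
          rw [show (Fin.last (w+1) : Fin (w+2)) = Fin.succ (Fin.last w) by
            rw [Fin.succ_last]]
          rw [Fin.cons_succ, Fin.cons_zero, Fin.snoc_last]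
        rcases eq_or_ne t (Fin.last (w+1)) with rfl | htl
        · rw [Equiv.swap_apply_right, Fin.cons_zero]
          rw [show (Fin.last (w+1) : Fin (w+2)) = Fin.succ (Fin.last w) by
            rw [Fin.succ_last]]
          rw [Fin.cons_succ, Fin.snoc_last]
        · rw [Equiv.swap_apply_of_ne_of_ne ht0 htl]
          obtain ⟨t', rfl⟩ : ∃ t', Fin.succ t' = t := by
            rcases Fin.eq_zero_or_eq_succ t with h | ⟨t', rfl⟩
            · exact absurd h ht0
            · exact ⟨t', rfl⟩
          have ht'l : t' ≠ Fin.last w := by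
            intro hcon
            apply htl
            rw [hcon, Fin.succ_last]
          obtain ⟨t'', rfl⟩ := Fin.exists_castSucc_eq.mpr ht'l
          rw [Fin.cons_succ, Fin.cons_succ, Fin.snoc_castSucc, Fin.snoc_castSucc]
      have hτswap := iFD_swap_last (w+1) hτ 0
        (Fin.cons u (Fin.snoc m'' v)) (0 : Fin (w+2))
      have hσswap := iFD_swap_last (w+1) hσ 0
        (Fin.cons u (Fin.snoc m'' v)) (0 : Fin (w+2))
      rw [htuple] at hτswap hσswap
      have : D (Fin.cons v (Fin.snoc m'' u))
          = iteratedFDeriv ℝ (w+2) τ 0 (Fin.cons v (Fin.snoc m'' u))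
            - iteratedFDeriv ℝ (w+2) σ 0 (Fin.cons v (Fin.snoc m'' u)) := by
        rw [hD]; rfl
      rw [this, hτswap, hσswap, hD]
      rfl
    -- the braid argument
    have braid : ∀ (i j k : Fin n) (m'' : Fin w → (Fin n → ℝ)),
        G0 (D (Fin.cons (e k) (Fin.snoc m'' (e i)))) (L (e j)) = 0 := by
      intro i j k m''
      set c : Fin n → Fin n → Fin n → ℝ := fun i j k =>
        G0 (D (Fin.cons (e k) (Fin.snoc m'' (e i)))) (L (e j)) with hc
      have anti : ∀ i j k, c i j k + c j i k = 0 := by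
        intro i j k
        have := REL i j (Fin.cons (e k) m'')
        rw [← Fin.cons_snoc_eq_snoc_cons, ← Fin.cons_snoc_eq_snoc_cons] at this
        rw [hc]
        simp only
        rw [hG0symm (D (Fin.cons (e k) (Fin.snoc m'' (e j)))) (L (e i))]
        exact this
      have sym13 : ∀ i j k, c i j k = c k j i := by
        intro i j k
        rw [hc]
        simp only
        rw [SYM]
      have h1 := anti i j k
      have h2 := sym13 j i k
      have h3 := anti k i j
      have h4 := sym13 i k j
      have h5 := anti j k i
      have h6 := sym13 i j k
      have hzero : c i j k = 0 := by linarith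
      exact hzero
    -- value of the pulled back metric at 0 : L is an isometry on basis vectors
    have hval : ∀ i j : Fin n, G0 (L (e i)) (L (e j)) = g i j 0 := by
      intro i j
      have h0 := congrFun (congrArg DFunLike.coe (hτg 0 (by omega) i j))
        (fun _ => (0 : Fin n → ℝ))
      simp only [iteratedFDeriv_zero_apply] at h0
      rw [← h0]
      rw [hG0]
      simp only [pullbackMetric, he]
      refine Finset.sum_congr rfl (fun a _ => Finset.sum_congr rfl (fun b _ => ?_))
      simp only [p_eq_pt τ hτ a i, p_eq_pt τ hτ b j, hτ0, hL]
      try ring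
    -- decomposition of L applied to a vector
    have hLdecomp : ∀ v : Fin n → ℝ, L v = ∑ t : Fin n, v t • L (e t) := by
      intro v
      conv_lhs => rw [pi_repr v]
      rw [map_sum]
      exact Finset.sum_congr rfl (fun t _ => by rw [map_smul])
    -- G0 of L v , L v
    have hkey : ∀ (v : Fin n → ℝ) (x : Fin n → ℝ),
        G0 x (L v) = ∑ t : Fin n, v t * G0 x (L (e t)) := by
      intro v x
      rw [hG0]
      simp only
      conv_lhs => rw [hLdecomp v]
      exact G0_lin (fun a b => g a b 0) x v (fun t => L (e t))
    have hGLL : ∀ v : Fin n → ℝ, G0 (L v) (L v) = G0 v v := by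
      intro v
      rw [hkey v (L v)]
      have h2 : ∀ t, G0 (L v) (L (e t)) = ∑ t' : Fin n, v t' * g t' t 0 := by
        intro t
        rw [hG0symm, hkey v (L (e t))]
        exact Finset.sum_congr rfl (fun t' _ => by rw [hG0symm, hval])
      simp only [h2]
      rw [hG0]
      simp only
      refine Finset.sum_congr rfl (fun a _ => ?_)
      rw [Finset.mul_sum]
      refine Finset.sum_congr rfl (fun b _ => ?_)
      rw [hgsym b a]
      ring
    -- G0 at zero
    have hG00 : ∀ v : Fin n → ℝ, G0 0 v = 0 := by
      intro v
      rw [hG0]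
      simp
    -- injectivity of L
    have hLinj : Function.Injective L := by
      intro v v' hvv
      by_contra hne
      have hsub : L (v - v') = 0 := by rw [map_sub, hvv, sub_self]
      have h1 : G0 (L (v - v')) (L (v - v')) = G0 (v - v') (v - v') := hGLL _
      rw [hsub, hG00] at h1
      have h2 : (0:ℝ) < G0 (v - v') (v - v') := by
        have := hgpos 0 (v - v') (sub_ne_zero.mpr hne)
        rw [hG0]
        exact this
      rw [← h1] at h2
      exact lt_irrefl _ h2
    have hLsurj : Function.Surjective L := by
      have h := (LinearMap.injective_iff_surjective
        (f := (L : (Fin n → ℝ) →ₗ[ℝ] (Fin n → ℝ)))).mp hLinj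
      exact h
    -- vanishing of D on tuples of basis vectors
    have hD0 : ∀ (i k : Fin n) (m'' : Fin w → (Fin n → ℝ)),
        D (Fin.cons (e k) (Fin.snoc m'' (e i))) = 0 := by
      intro i k m''
      set x : Fin n → ℝ := D (Fin.cons (e k) (Fin.snoc m'' (e i))) with hx
      have hall : ∀ w' : Fin n → ℝ, G0 x w' = 0 := by
        intro w'
        obtain ⟨y, rfl⟩ := hLsurj w'
        rw [hkey y x]
        refine Finset.sum_eq_zero (fun t _ => ?_)
        rw [hx, braid i t k m'']
        ring
      by_contra hxne
      have := hgpos 0 x hxne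
      have h0 : G0 x x = 0 := hall x
      rw [hG0] at h0
      simp only at h0
      rw [h0] at this
      exact lt_irrefl _ this
    -- extend linearly in the first and last slot
    have hD1 : ∀ (i : Fin n) (m'' : Fin w → (Fin n → ℝ)) (u : Fin n → ℝ),
        D (Fin.cons u (Fin.snoc m'' (e i))) = 0 := by
      intro i m'' u
      set base : Fin (w+2) → (Fin n → ℝ) := Fin.cons 0 (Fin.snoc m'' (e i)) with hbase
      have hupd : ∀ u', Fin.cons u' (Fin.snoc m'' (e i)) = Function.update base 0 u' := by
        intro u'
        rw [hbase, Fin.update_cons_zero]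
      rw [hupd]
      have hlin := D.toContinuousLinearMap base 0
      have happ : ∀ u', D (Function.update base 0 u')
          = (D.toContinuousLinearMap base 0) u' := fun u' => rfl
      rw [happ]
      have hbasis : ∀ t : Fin n, (D.toContinuousLinearMap base 0) (e t) = 0 := by
        intro t
        rw [← happ, ← hupd]
        exact hD0 i t m''
      conv_lhs => rw [pi_repr u]
      rw [map_sum]
      refine Finset.sum_eq_zero (fun t _ => ?_)
      rw [map_smul]
      rw [show (Pi.single t 1 : Fin n → ℝ) = e t from rfl, hbasis]
      simp
    have hD2 : ∀ (u v : Fin n → ℝ) (m'' : Fin w → (Fin n → ℝ)),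
        D (Fin.cons u (Fin.snoc m'' v)) = 0 := by
      intro u v m''
      set base : Fin (w+2) → (Fin n → ℝ) := Fin.cons u (Fin.snoc m'' 0) with hbase
      have hupd : ∀ v', Fin.cons u (Fin.snoc m'' v')
          = Function.update base (Fin.last (w+1)) v' := by
        intro v'
        rw [hbase]
        rw [show (Fin.last (w+1) : Fin (w+2)) = Fin.succ (Fin.last w) by rw [Fin.succ_last]]
        rw [← Fin.cons_update, Fin.update_snoc_last]
      rw [hupd]
      have happ : ∀ v', D (Function.update base (Fin.last (w+1)) v')
          = (D.toContinuousLinearMap base (Fin.last (w+1))) v' := fun v' => rfl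
      rw [happ]
      have hbasis : ∀ t : Fin n, (D.toContinuousLinearMap base (Fin.last (w+1))) (e t) = 0 := by
        intro t
        rw [← happ, ← hupd]
        exact hD1 t m'' u
      conv_lhs => rw [pi_repr v]
      rw [map_sum]
      refine Finset.sum_eq_zero (fun t _ => ?_)
      rw [map_smul]
      rw [show (Pi.single t 1 : Fin n → ℝ) = e t from rfl, hbasis]
      simp
    -- conclude
    ext μ
    have hrecon : μ = Fin.cons (μ 0) (Fin.snoc (Fin.init (Fin.tail μ))
        (Fin.tail μ (Fin.last w))) := by
      rw [Fin.snoc_init_self, Fin.cons_self_tail]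
    have h0 := hD2 (μ 0) (Fin.tail μ (Fin.last w)) (Fin.init (Fin.tail μ))
    rw [← hrecon] at h0
    have := hDapp μ
    have hμ : iteratedFDeriv ℝ (w+2) τ 0 μ = iteratedFDeriv ℝ (w+2) σ 0 μ := by
      funext a
      have h1 := hDapp μ a
      rw [h0] at h1
      simp only [Pi.zero_apply] at h1
      linarith
    rw [hμ]
end
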